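/- arXiv:2004.11739 — 6 statements merged into one kernel-verified Lean document; each statement's English description precedes it below -/
import Mathlib

section
/- For every x ∈ ℝ \ {0} and every y ∈ (0,1): (1 − y²((n−1)/n)²) · γ̃(xy) ≤ γ(x) ≤ 16 · γ̃(x). -/
open Finset

/-!
Both bounds compare `sqMin x t = t² min(1, |x t|)` evaluated at the double differences
`b_{jkrs} = ã_{jr} - ã_{kr} - ã_{js} + ã_{ks}` with its values at the entries of the doubly
centered matrix `ã`.

Upper bound: `min(1, |x (u - v)|) ≤ min(1, |x u|) + min(1, |x v|)`, and since `t²` and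
`min(1, |x t|)` are similarly ordered, Chebyshev's sum inequality gives
`∑_{r,s} sqMin x (p_r - p_s) ≤ 4n ∑_r sqMin x p_r` for every `p` with zero sum. Applied first
along rows, then along columns, this yields the factor `16 n²`.

Lower bound: `∑_{k,s} b_{jkrs} = n² ã_{jr}`, a sum with at most `(n-1)²` nonzero terms, so
Cauchy–Schwarz bounds `n⁴ ã_{jr}²` by `(n-1)² ∑ b_{jkrs}²`. Each weight `min(1, |x y ã_{jr}|)`
is traded using `s² min(1, |x t|) ≤ sqMin x s + sqMin x t` with `t = y ã_{jr}`.
-/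

def sqMin (x t : ℝ) : ℝ := t ^ 2 * min 1 |x * t|

lemma sqMin_def (x t : ℝ) : sqMin x t = t ^ 2 * min 1 |x * t| := rfl

lemma sqMin_nonneg (x t : ℝ) : 0 ≤ sqMin x t := by unfold sqMin; positivity

@[simp] lemma sqMin_zero_right (x : ℝ) : sqMin x 0 = 0 := by simp [sqMin]

lemma sqMin_mul_right (x y t : ℝ) : sqMin x (y * t) = y ^ 2 * sqMin (x * y) t := by
  simp only [sqMin, mul_assoc]; ring

lemma min_one_add_le {a b : ℝ} (ha : 0 ≤ a) (hb : 0 ≤ b) :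
    min 1 (a + b) ≤ min 1 a + min 1 b := by
  rcases le_total 1 a with h | h <;> rcases le_total 1 b with h' | h' <;>
    simp only [min_eq_left, min_eq_right, h, h'] <;>
    linarith [min_le_left 1 (a + b), min_le_right 1 (a + b)]

lemma sqMin_sub_le (x s t : ℝ) :
    sqMin x (s - t) ≤ (s - t) ^ 2 * (min 1 |x * s| + min 1 |x * t|) := by
  refine mul_le_mul_of_nonneg_left ?_ (sq_nonneg _)
  calc min 1 |x * (s - t)| ≤ min 1 (|x * s| + |x * t|) :=
        min_le_min_left 1 (by rw [mul_sub]; exact abs_sub _ _)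
    _ ≤ _ := min_one_add_le (abs_nonneg _) (abs_nonneg _)

lemma sq_mul_min_one_le_sqMin_add_sqMin (x s t : ℝ) :
    s ^ 2 * min 1 |x * t| ≤ sqMin x s + sqMin x t := by
  rcases le_total |t| |s| with h | h
  · have : min 1 |x * t| ≤ min 1 |x * s| :=
      min_le_min_left 1 (by rw [abs_mul, abs_mul]; gcongr)
    nlinarith [sqMin_nonneg x t, sq_nonneg s, sqMin_def x s]
  · have : s ^ 2 ≤ t ^ 2 := sq_le_sq.mpr h
    have hm : 0 ≤ min 1 |x * t| := by positivity
    nlinarith [sqMin_nonneg x s, sqMin_def x t]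

lemma sq_sum_mul_min_one_le {α : Type*} (D : Finset α) (f : α → ℝ) (x t : ℝ) :
    (∑ i ∈ D, f i) ^ 2 * min 1 |x * t| ≤ #D * (∑ i ∈ D, sqMin x (f i) + #D * sqMin x t) := by
  have hm : 0 ≤ min 1 |x * t| := by positivity
  calc (∑ i ∈ D, f i) ^ 2 * min 1 |x * t|
      ≤ (#D * ∑ i ∈ D, f i ^ 2) * min 1 |x * t| := by gcongr; exact sq_sum_le_card_mul_sum_sq
    _ = #D * ∑ i ∈ D, f i ^ 2 * min 1 |x * t| := by rw [mul_assoc, sum_mul]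
    _ ≤ #D * ∑ i ∈ D, (sqMin x (f i) + sqMin x t) := by
        gcongr with i; exact sq_mul_min_one_le_sqMin_add_sqMin x _ _
    _ = #D * (∑ i ∈ D, sqMin x (f i) + #D * sqMin x t) := by
        rw [sum_add_distrib, sum_const, nsmul_eq_mul]

lemma monovary_sq_min_one {ι : Type*} (x : ℝ) (p : ι → ℝ) :
    Monovary (fun r => p r ^ 2) (fun r => min 1 |x * p r|) := by
  intro i j hij
  have h : |x| * |p i| < |x| * |p j| := by
    simpa only [abs_mul] using (min_lt_min_right_iff.mp hij).1
  exact sq_le_sq.mpr (lt_of_mul_lt_mul_left h (abs_nonneg x)).le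

variable {ι κ : Type*}

def doubleDiff (c : ι → κ → ℝ) (j k : ι) (r s : κ) : ℝ := c j r - c k r - c j s + c k s

@[simp] lemma doubleDiff_self_left (c : ι → κ → ℝ) (j : ι) (r s : κ) :
    doubleDiff c j j r s = 0 := by simp [doubleDiff]

@[simp] lemma doubleDiff_self_right (c : ι → κ → ℝ) (j k : ι) (r : κ) :
    doubleDiff c j k r r = 0 := by simp [doubleDiff]

lemma ite_sqMin_doubleDiff [DecidableEq ι] [DecidableEq κ] (c : ι → κ → ℝ) (x : ℝ) (j k : ι)
    (r s : κ) :
    (if j ≠ k ∧ r ≠ s then sqMin x (doubleDiff c j k r s) else 0) =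
      sqMin x (doubleDiff c j k r s) := by
  split_ifs with h
  · rfl
  · obtain rfl | rfl : j = k ∨ r = s := by tauto
    all_goals simp

section Fintype

variable [Fintype ι] [Fintype κ]

lemma sum_sub_sq_of_sum_eq_zero {p : ι → ℝ} (hp : ∑ s, p s = 0) (c : ℝ) :
    ∑ s, (c - p s) ^ 2 = Fintype.card ι * c ^ 2 + ∑ s, p s ^ 2 := by
  simp only [sub_sq, sum_add_distrib, sum_sub_distrib, ← mul_sum, hp, sum_const, card_univ,
    nsmul_eq_mul]
  ring

lemma sum_sum_sqMin_sub_le {p : ι → ℝ} (hp : ∑ s, p s = 0) (x : ℝ) :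
    ∑ r, ∑ s, sqMin x (p r - p s) ≤ 4 * Fintype.card ι * ∑ r, sqMin x (p r) := by
  set m : ι → ℝ := fun r => min 1 |x * p r|
  have cheby : (∑ r, p r ^ 2) * ∑ r, m r ≤ Fintype.card ι * ∑ r, p r ^ 2 * m r :=
    (monovary_sq_min_one x p).sum_mul_sum_le_card_mul_sum
  calc ∑ r, ∑ s, sqMin x (p r - p s)
      ≤ ∑ r, ∑ s, (p r - p s) ^ 2 * (m r + m s) :=
        sum_le_sum fun r _ => sum_le_sum fun s _ => sqMin_sub_le x _ _
    _ = 2 * ∑ r, (∑ s, (p r - p s) ^ 2) * m r := by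
        simp only [mul_add, sum_add_distrib, sum_mul]
        rw [sum_comm (f := fun r s => (p r - p s) ^ 2 * m s)]
        simp only [sub_sq_comm (p _) (p _)]
        ring
    _ = 2 * (Fintype.card ι * ∑ r, p r ^ 2 * m r + (∑ r, p r ^ 2) * ∑ r, m r) := by
        simp only [sum_sub_sq_of_sum_eq_zero hp, add_mul, sum_add_distrib, mul_sum, mul_assoc,
          sum_mul]
    _ ≤ 4 * Fintype.card ι * ∑ r, sqMin x (p r) := by
        simp only [sqMin_def]
        linarith

lemma sum_erase_product_eq_sum {M : Type*} [AddCommMonoid M] [DecidableEq ι] [DecidableEq κ]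
    (f : ι → κ → M) {j : ι} {r : κ} (hj : ∀ s, f j s = 0) (hr : ∀ k, f k r = 0) :
    ∑ p ∈ (univ.erase j) ×ˢ (univ.erase r), f p.1 p.2 = ∑ k, ∑ s, f k s := by
  rw [sum_product, sum_erase _ (by simp [hj])]
  exact sum_congr rfl fun k _ => sum_erase _ (hr k)

structure IsDoublyCentered (c : ι → κ → ℝ) : Prop where
  sum_row : ∀ j, ∑ s, c j s = 0
  sum_col : ∀ r, ∑ j, c j r = 0

namespace IsDoublyCentered

variable {c : ι → κ → ℝ}

lemma sum_sum_doubleDiff (hc : IsDoublyCentered c) (j : ι) (r : κ) :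
    ∑ k, ∑ s, doubleDiff c j k r s = Fintype.card ι * Fintype.card κ * c j r := by
  simp only [doubleDiff, sum_add_distrib, sum_sub_distrib, sum_const, card_univ, nsmul_eq_mul,
    hc.sum_row, hc.sum_col, ← mul_sum]
  ring

lemma sum_sum_sqMin_doubleDiff_le (hc : IsDoublyCentered c) (x : ℝ) :
    ∑ j, ∑ k, ∑ r, ∑ s, sqMin x (doubleDiff c j k r s) ≤
      16 * Fintype.card ι * Fintype.card κ * ∑ j, ∑ r, sqMin x (c j r) := by
  have hrows : ∀ j k, ∑ r, ∑ s, sqMin x (doubleDiff c j k r s) ≤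
      4 * Fintype.card κ * ∑ s, sqMin x (c j s - c k s) := fun j k => by
    have hp : ∑ s, (c j s - c k s) = 0 := by rw [sum_sub_distrib, hc.sum_row, hc.sum_row, sub_zero]
    convert sum_sum_sqMin_sub_le (p := fun s => c j s - c k s) hp x using 4 with r - s -
    simp only [doubleDiff]; ring_nf
  calc ∑ j, ∑ k, ∑ r, ∑ s, sqMin x (doubleDiff c j k r s)
      ≤ ∑ j, ∑ k, 4 * Fintype.card κ * ∑ s, sqMin x (c j s - c k s) :=
        sum_le_sum fun j _ => sum_le_sum fun k _ => hrows j k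
    _ = 4 * Fintype.card κ * ∑ s, ∑ j, ∑ k, sqMin x (c j s - c k s) := by
        simp only [← mul_sum]
        exact congrArg _ ((sum_congr rfl fun j _ => sum_comm).trans sum_comm)
    _ ≤ 4 * Fintype.card κ * ∑ s, 4 * Fintype.card ι * ∑ j, sqMin x (c j s) := by
        gcongr with s; exact sum_sum_sqMin_sub_le (hc.sum_col s) x
    _ = 16 * Fintype.card ι * Fintype.card κ * ∑ j, ∑ r, sqMin x (c j r) := by
        rw [sum_comm (f := fun j r => sqMin x (c j r)), ← mul_sum]; ring

lemma mul_sqMin_le_sum_sqMin_doubleDiff (hc : IsDoublyCentered c) (x y : ℝ) (j : ι) (r : κ) :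
    (((Fintype.card ι : ℝ) * Fintype.card κ) ^ 2 -
        (((Fintype.card ι : ℝ) - 1) * (Fintype.card κ - 1)) ^ 2 * y ^ 2) * sqMin (x * y) (c j r) ≤
      ((Fintype.card ι : ℝ) - 1) * (Fintype.card κ - 1) *
        ∑ k, ∑ s, sqMin x (doubleDiff c j k r s) := by
  classical
  set D := (univ.erase j) ×ˢ (univ.erase r)
  have hD : (#D : ℝ) = ((Fintype.card ι : ℝ) - 1) * (Fintype.card κ - 1) := by
    have hι : 1 ≤ Fintype.card ι := Fintype.card_pos_iff.mpr ⟨j⟩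
    have hκ : 1 ≤ Fintype.card κ := Fintype.card_pos_iff.mpr ⟨r⟩
    simp [D, Nat.cast_sub hι, Nat.cast_sub hκ]
  have key := sq_sum_mul_min_one_le D (fun p => doubleDiff c j p.1 r p.2) x (y * c j r)
  rw [sum_erase_product_eq_sum (fun k s => doubleDiff c j k r s) (by simp) (by simp),
    sum_erase_product_eq_sum (fun k s => sqMin x (doubleDiff c j k r s)) (by simp) (by simp),
    hc.sum_sum_doubleDiff, hD, sqMin_mul_right, ← mul_assoc] at key
  simp only [sqMin_def] at key ⊢
  linear_combination key

lemma mul_sum_sqMin_le_sum_sqMin_doubleDiff (hc : IsDoublyCentered c) (x y : ℝ) :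
    (((Fintype.card ι : ℝ) * Fintype.card κ) ^ 2 -
        (((Fintype.card ι : ℝ) - 1) * (Fintype.card κ - 1)) ^ 2 * y ^ 2) *
        ∑ j, ∑ r, sqMin (x * y) (c j r) ≤
      ((Fintype.card ι : ℝ) - 1) * (Fintype.card κ - 1) *
        ∑ j, ∑ k, ∑ r, ∑ s, sqMin x (doubleDiff c j k r s) := by
  calc _ = ∑ j, ∑ r, (((Fintype.card ι : ℝ) * Fintype.card κ) ^ 2 -
        (((Fintype.card ι : ℝ) - 1) * (Fintype.card κ - 1)) ^ 2 * y ^ 2) *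
          sqMin (x * y) (c j r) := by simp only [mul_sum]
    _ ≤ ∑ j, ∑ r, ((Fintype.card ι : ℝ) - 1) * (Fintype.card κ - 1) *
          ∑ k, ∑ s, sqMin x (doubleDiff c j k r s) :=
        sum_le_sum fun j _ => sum_le_sum fun r _ => hc.mul_sqMin_le_sum_sqMin_doubleDiff x y j r
    _ = _ := by
        simp only [← mul_sum]
        exact congrArg _ (sum_congr rfl fun j _ => sum_comm)

end IsDoublyCentered

noncomputable def doubleCenter (a : ι → κ → ℝ) (j : ι) (r : κ) : ℝ :=
  a j r - (∑ k, a k r) / Fintype.card ι - (∑ s, a j s) / Fintype.card κ +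
    (∑ k, ∑ s, a k s) / (Fintype.card ι * Fintype.card κ)

lemma sum_doubleCenter_row (a : ι → κ → ℝ) (j : ι) : ∑ s, doubleCenter a j s = 0 := by
  have : Nonempty ι := ⟨j⟩
  rcases isEmpty_or_nonempty κ with _ | _
  · simp
  have : (Fintype.card ι : ℝ) ≠ 0 := by simp
  have : (Fintype.card κ : ℝ) ≠ 0 := by simp
  simp only [doubleCenter, sum_add_distrib, sum_sub_distrib, sum_const, card_univ, nsmul_eq_mul,
    ← sum_div]
  rw [sum_comm (f := fun s k => a k s)]
  field_simp
  ring

lemma doubleCenter_swap (a : ι → κ → ℝ) (j : ι) (r : κ) :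
    doubleCenter (fun r j => a j r) r j = doubleCenter a j r := by
  simp only [doubleCenter]
  rw [sum_comm (f := fun r j => a j r)]
  ring

lemma isDoublyCentered_doubleCenter (a : ι → κ → ℝ) : IsDoublyCentered (doubleCenter a) where
  sum_row := sum_doubleCenter_row a
  sum_col r := by simpa only [doubleCenter_swap] using sum_doubleCenter_row (fun r j => a j r) r

lemma doubleDiff_doubleCenter (a : ι → κ → ℝ) : doubleDiff (doubleCenter a) = doubleDiff a := by
  ext j k r s
  simp only [doubleDiff, doubleCenter]
  ring

end Fintype

theorem stmt_1_general
    (n : ℕ) (hn : 2 ≤ n) (a : Fin n → Fin n → ℝ)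
    (atil : Fin n → Fin n → ℝ)
    (hatil : ∀ j r, atil j r =
      a j r - (∑ k, a k r) / n - (∑ s, a j s) / n + (∑ k, ∑ s, a k s) / (n : ℝ) ^ 2)
    (b : Fin n → Fin n → Fin n → Fin n → ℝ)
    (hb : ∀ j k r s, b j k r s = a j r - a k r - a j s + a k s)
    (γ : ℝ → ℝ)
    (hγ : ∀ x, γ x = (∑ j, ∑ k, ∑ r, ∑ s,
      if j ≠ k ∧ r ≠ s then (b j k r s) ^ 2 * min 1 |x * b j k r s| else 0)
      / ((n : ℝ) ^ 2 * ((n : ℝ) - 1)))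
    (γt : ℝ → ℝ)
    (hγt : ∀ x, γt x = (∑ j, ∑ r, (atil j r) ^ 2 * min 1 |x * atil j r|)
      / ((n : ℝ) - 1))
    (x : ℝ) (y : ℝ) :
    (1 - y ^ 2 * (((n : ℝ) - 1) / n) ^ 2) * γt (x * y) ≤ γ x ∧
      γ x ≤ 16 * γt x := by
  obtain rfl : atil = doubleCenter a := by ext j r; simp [hatil, doubleCenter, sq]
  obtain rfl : b = doubleDiff (doubleCenter a) := by
    rw [doubleDiff_doubleCenter]; ext j k r s; exact hb j k r s
  have hc := isDoublyCentered_doubleCenter a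
  have hlow := hc.mul_sum_sqMin_le_sum_sqMin_doubleDiff x y
  have hup := hc.sum_sum_sqMin_doubleDiff_le x
  simp only [Fintype.card_fin] at hlow hup
  simp only [hγ, hγt, ← sqMin_def, ite_sqMin_doubleDiff]
  set S := ∑ j, ∑ k, ∑ r, ∑ s, sqMin x (doubleDiff (doubleCenter a) j k r s)
  set T' := ∑ j, ∑ r, sqMin (x * y) (doubleCenter a j r)
  have hT' : 0 ≤ T' := sum_nonneg fun j _ => sum_nonneg fun r _ => sqMin_nonneg _ _
  have hN : (2 : ℝ) ≤ n := by exact_mod_cast hn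
  have hN1 : (0 : ℝ) < n - 1 := by linarith
  constructor
  · calc _ = (n ^ 2 - y ^ 2 * (n - 1) ^ 2) * T' / (n ^ 2 * (n - 1)) := by field_simp
      _ ≤ S / (n ^ 2 * (n - 1)) := by
        gcongr
        refine le_of_mul_le_mul_left ?_ (by positivity : (0 : ℝ) < (n - 1) ^ 2)
        -- `(n-1)² (n² - y² (n-1)²) = n⁴ - (n-1)⁴ y² - n² (2n - 1)`
        linear_combination hlow + mul_nonneg (mul_nonneg (sq_nonneg (n : ℝ))
          (by linarith : (0 : ℝ) ≤ 2 * n - 1)) hT'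
  · calc S / (n ^ 2 * (n - 1)) ≤ 16 * n * n * (∑ j, ∑ r, sqMin x (doubleCenter a j r)) /
          (n ^ 2 * (n - 1)) := by gcongr
      _ = _ := by field_simp

/-- Lemma 2, inequality (10): `(1 − y²((n−1)/n)²) γ̃(xy) ≤ γ(x) ≤ 16 γ̃(x)`. -/
theorem stmt_1
    (n : ℕ) (hn : 2 ≤ n) (a : Fin n → Fin n → ℝ)
    (atil : Fin n → Fin n → ℝ)
    (hatil : ∀ j r, atil j r =
      a j r - (∑ k, a k r) / n - (∑ s, a j s) / n + (∑ k, ∑ s, a k s) / (n : ℝ) ^ 2)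
    (b : Fin n → Fin n → Fin n → Fin n → ℝ)
    (hb : ∀ j k r s, b j k r s = a j r - a k r - a j s + a k s)
    (γ : ℝ → ℝ)
    (hγ : ∀ x, γ x = (∑ j, ∑ k, ∑ r, ∑ s,
      if j ≠ k ∧ r ≠ s then (b j k r s) ^ 2 * min 1 |x * b j k r s| else 0)
      / ((n : ℝ) ^ 2 * ((n : ℝ) - 1)))
    (γt : ℝ → ℝ)
    (hγt : ∀ x, γt x = (∑ j, ∑ r, (atil j r) ^ 2 * min 1 |x * atil j r|)
      / ((n : ℝ) - 1))
    (x : ℝ) (hx : x ≠ 0) (y : ℝ) (hy : y ∈ Set.Ioo (0 : ℝ) 1) :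
    (1 - y ^ 2 * (((n : ℝ) - 1) / n) ^ 2) * γt (x * y) ≤ γ x ∧
      γ x ≤ 16 * γt x :=
  stmt_1_general n hn a atil hatil b hb γ hγ γt hγt x y
end

section
/- For every x ∈ ℝ: ∫₀¹ u γ(xu) du ≤ (1/2) γ(2x/3). -/
/-!
`γ` is a nonnegative combination of the functions `x ↦ min 1 |x c|`, and the inequality is
preserved by nonnegative combinations, so it suffices to prove it for one of them. There,
with `C = |c x|`, the integrand `u min 1 (C u)` is bounded both by `C u²` and by `u`, so the
integral is at most `min (C/3) (1/2) = (1/2) min 1 (2C/3)`.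
-/

def MomentBounded (g : ℝ → ℝ) : Prop :=
  Continuous g ∧ ∀ x, (∫ u in (0:ℝ)..1, u * g (x * u)) ≤ 1 / 2 * g (2 * x / 3)

lemma intervalIntegrable_mul_comp_const_mul {g : ℝ → ℝ} (hg : Continuous g) (x : ℝ) :
    IntervalIntegrable (fun u => u * g (x * u)) MeasureTheory.volume 0 1 :=
  (continuous_id.mul (hg.comp (continuous_const_mul x))).intervalIntegrable _ _

namespace MomentBounded

lemma zero : MomentBounded 0 :=
  ⟨continuous_const, fun x => by simp⟩

lemma add {f g : ℝ → ℝ} (hf : MomentBounded f) (hg : MomentBounded g) :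
    MomentBounded (f + g) := by
  refine ⟨hf.1.add hg.1, fun x => ?_⟩
  simp only [Pi.add_apply, mul_add]
  rw [intervalIntegral.integral_add (intervalIntegrable_mul_comp_const_mul hf.1 x)
    (intervalIntegrable_mul_comp_const_mul hg.1 x)]
  linarith [hf.2 x, hg.2 x]

lemma const_mul {g : ℝ → ℝ} (hg : MomentBounded g) {c : ℝ} (hc : 0 ≤ c) :
    MomentBounded (fun x => c * g x) := by
  refine ⟨continuous_const.mul hg.1, fun x => ?_⟩
  simp only [mul_left_comm _ c, intervalIntegral.integral_const_mul]
  nlinarith [mul_le_mul_of_nonneg_left (hg.2 x) hc]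

lemma div_const {g : ℝ → ℝ} (hg : MomentBounded g) {c : ℝ} (hc : 0 ≤ c) :
    MomentBounded (fun x => g x / c) := by
  simpa only [div_eq_inv_mul] using hg.const_mul (inv_nonneg.mpr hc)

lemma sum {ι : Type*} (s : Finset ι) {g : ι → ℝ → ℝ} (hg : ∀ i ∈ s, MomentBounded (g i)) :
    MomentBounded (fun x => ∑ i ∈ s, g i x) := by
  simpa only [← Finset.sum_apply] using Finset.sum_induction g MomentBounded
    (fun _ _ => add) zero hg

lemma ite_zero (P : Prop) [Decidable P] {g : ℝ → ℝ} (hg : P → MomentBounded g) :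
    MomentBounded (fun x => if P then g x else 0) := by
  by_cases hP : P
  · simpa only [if_pos hP] using hg hP
  · simp only [if_neg hP]
    exact zero

end MomentBounded

lemma integral_mul_min_one_mul_le (c : ℝ) :
    (∫ u in (0:ℝ)..1, u * min 1 (c * u)) ≤ 1 / 2 * min 1 (2 * c / 3) := by
  have hint : IntervalIntegrable (fun u => u * min 1 (c * u)) MeasureTheory.volume 0 1 :=
    intervalIntegrable_mul_comp_const_mul (continuous_const.min continuous_id) c
  have hquad : (∫ u in (0:ℝ)..1, u * min 1 (c * u)) ≤ ∫ u in (0:ℝ)..1, c * u ^ 2 := by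
    refine intervalIntegral.integral_mono_on zero_le_one hint
      ((continuous_const.mul (continuous_pow 2)).intervalIntegrable _ _) fun u hu => ?_
    nlinarith [hu.1, min_le_right 1 (c * u)]
  have hlin : (∫ u in (0:ℝ)..1, u * min 1 (c * u)) ≤ ∫ u in (0:ℝ)..1, u := by
    refine intervalIntegral.integral_mono_on zero_le_one hint
      (continuous_id.intervalIntegrable _ _) fun u hu => ?_
    nlinarith [hu.1, min_le_left 1 (c * u)]
  rw [intervalIntegral.integral_const_mul, integral_pow] at hquad
  rw [integral_id] at hlin
  rw [mul_min_of_nonneg _ _ (by norm_num : (0:ℝ) ≤ 1 / 2)]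
  refine le_min ?_ ?_ <;> norm_num at hquad hlin ⊢ <;> linarith

lemma momentBounded_min_one_abs_mul (c : ℝ) : MomentBounded (fun x => min 1 |x * c|) := by
  refine ⟨by fun_prop, fun x => ?_⟩
  have habs : ∀ u ∈ Set.uIcc (0:ℝ) 1, u * min 1 |x * u * c| = u * min 1 (|x * c| * u) := by
    intro u hu
    rw [Set.uIcc_of_le zero_le_one] at hu
    rw [mul_right_comm, abs_mul _ u, abs_of_nonneg hu.1]
  have hscale : |2 * x / 3 * c| = 2 * |x * c| / 3 := by
    rw [show 2 * x / 3 * c = 2 / 3 * (x * c) by ring, abs_mul,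
      abs_of_pos (by norm_num : (0:ℝ) < 2 / 3)]
    ring
  show _ ≤ 1 / 2 * min 1 |2 * x / 3 * c|
  rw [intervalIntegral.integral_congr habs, hscale]
  exact integral_mul_min_one_mul_le _

theorem stmt_9_general
    (n : ℕ)
    (b : Fin n → Fin n → Fin n → Fin n → ℝ)
    (γ : ℝ → ℝ)
    (hγ : ∀ x, γ x = (∑ j, ∑ k, ∑ r, ∑ s,
      if j ≠ k ∧ r ≠ s then (b j k r s) ^ 2 * min 1 |x * b j k r s| else 0)
      / ((n : ℝ) ^ 2 * ((n : ℝ) - 1)))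
    (x : ℝ) :
    (∫ u in (0:ℝ)..1, u * γ (x * u)) ≤ 1 / 2 * γ (2 * x / 3) := by
  have hD : 0 ≤ (n : ℝ) ^ 2 * ((n : ℝ) - 1) := by
    rcases n with _ | n
    · simp
    · push_cast; nlinarith
  have hγ_bounded : MomentBounded γ := by
    rw [funext hγ]
    refine MomentBounded.div_const (MomentBounded.sum _ fun j _ => MomentBounded.sum _
      fun k _ => MomentBounded.sum _ fun r _ => MomentBounded.sum _ fun s _ =>
        MomentBounded.ite_zero _ fun _ => ?_) hD
    exact (momentBounded_min_one_abs_mul _).const_mul (sq_nonneg _)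
  exact hγ_bounded.2 x

/-- `∫₀¹ u γ(xu) du ≤ (1/2) γ(2x/3)`. -/
theorem stmt_9
    (n : ℕ) (hn : 2 ≤ n) (a : Fin n → Fin n → ℝ)
    (b : Fin n → Fin n → Fin n → Fin n → ℝ)
    (hb : ∀ j k r s, b j k r s = a j r - a k r - a j s + a k s)
    (γ : ℝ → ℝ)
    (hγ : ∀ x, γ x = (∑ j, ∑ k, ∑ r, ∑ s,
      if j ≠ k ∧ r ≠ s then (b j k r s) ^ 2 * min 1 |x * b j k r s| else 0)
      / ((n : ℝ) ^ 2 * ((n : ℝ) - 1)))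
    (x : ℝ) :
    (∫ u in (0:ℝ)..1, u * γ (x * u)) ≤ 1 / 2 * γ (2 * x / 3) :=
  stmt_9_general n b γ hγ x
end

section
/- For every ℓ ∈ [0,∞), t ∈ ℝ, and u ∈ [0,1]: h_ℓ(tu) · exp(−(1−u²)σ²t²/2) ≤ h_ℓ(t). -/
/-!
For `ℓ ≤ n` write `h_ℓ(t) = min 1 (exp E(t))` with `E(t) = ℓ - c t² (σ² - γ(2κt)/4)` and
`c = (n - ℓ - 1) / (4(n - 1))`, so `|c| ≤ 1/4`. Since the Gaussian factor is at most `1`, it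
suffices to show `E(tu) - (1 - u²) σ² t² / 2 ≤ E(t)`. Up to the factor `n²(n - 1)`, `γ` is a sum of
nonnegative weights `b²` against `min 1 |x b|`, and `4σ²` is the total weight; hence
`0 ≤ γ(ux) ≤ γ(x) ≤ 4σ²` and `γ(x) - γ(ux) ≤ 4(1 - u)σ²`. With `G = σ² - γ/4 ∈ [0, σ²]`, split
`c (G(t) - u² G(tu)) = c (G(t) - G(tu)) + c (1 - u²) G(tu)`; each part is at most `(1 - u²) σ² / 4`.
-/

open Finset

lemma min_one_le_min_one_mul_add {A u : ℝ} (hu0 : 0 ≤ u) (hu1 : u ≤ 1) :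
    min 1 A ≤ min 1 (A * u) + (1 - u) := by
  rw [← min_add_add_right]
  refine le_min (by linarith [min_le_left 1 A]) ?_
  rcases le_total A 1 with h | h
  · exact min_le_of_right_le (by nlinarith)
  · exact min_le_of_left_le (by nlinarith)

lemma abs_mul_right_comm_of_nonneg {x u : ℝ} (hu : 0 ≤ u) (c : ℝ) :
    |x * u * c| = |x * c| * u := by
  rw [mul_right_comm, abs_mul, abs_of_nonneg hu]

section TruncatedMoment

variable {ι : Type*} [Fintype ι] (w v : ι → ℝ)

def truncatedMoment (x : ℝ) : ℝ := ∑ i, w i * min 1 |x * v i|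

variable {w}

lemma truncatedMoment_nonneg (hw : 0 ≤ w) (x : ℝ) : 0 ≤ truncatedMoment w v x :=
  sum_nonneg fun i _ => mul_nonneg (hw i) (le_min zero_le_one (abs_nonneg _))

lemma truncatedMoment_le_sum (hw : 0 ≤ w) (x : ℝ) : truncatedMoment w v x ≤ ∑ i, w i :=
  sum_le_sum fun i _ => mul_le_of_le_one_right (hw i) (min_le_left _ _)

lemma truncatedMoment_mul_le (hw : 0 ≤ w) {u : ℝ} (hu0 : 0 ≤ u) (hu1 : u ≤ 1) (x : ℝ) :
    truncatedMoment w v (x * u) ≤ truncatedMoment w v x := by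
  refine sum_le_sum fun i _ => mul_le_mul_of_nonneg_left ?_ (hw i)
  rw [abs_mul_right_comm_of_nonneg hu0]
  exact min_le_min_left _ (mul_le_of_le_one_right (abs_nonneg _) hu1)

lemma truncatedMoment_le_mul_add (hw : 0 ≤ w) {u : ℝ} (hu0 : 0 ≤ u) (hu1 : u ≤ 1) (x : ℝ) :
    truncatedMoment w v x ≤ truncatedMoment w v (x * u) + (1 - u) * ∑ i, w i := by
  rw [truncatedMoment, truncatedMoment, mul_sum, ← sum_add_distrib]
  refine sum_le_sum fun i _ => ?_
  rw [abs_mul_right_comm_of_nonneg hu0, mul_comm (1 - u), ← mul_add]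
  exact mul_le_mul_of_nonneg_left (min_one_le_min_one_mul_add hu0 hu1) (hw i)

lemma truncatedMoment_div_bounds (hw : 0 ≤ w) {N S : ℝ} (hN : 0 ≤ N) {γ : ℝ → ℝ}
    (hγ : ∀ x, γ x = truncatedMoment w v x / N) (hS : S = (∑ i, w i) / N)
    {u : ℝ} (hu0 : 0 ≤ u) (hu1 : u ≤ 1) (x : ℝ) :
    0 ≤ γ (x * u) ∧ γ (x * u) ≤ γ x ∧ γ x ≤ S ∧ γ x ≤ γ (x * u) + (1 - u) * S := by
  simp only [hγ, hS]
  refine ⟨div_nonneg (truncatedMoment_nonneg v hw _) hN,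
    div_le_div_of_nonneg_right (truncatedMoment_mul_le v hw hu0 hu1 x) hN,
    div_le_div_of_nonneg_right (truncatedMoment_le_sum v hw x) hN, ?_⟩
  rw [mul_div_assoc', ← add_div]
  exact div_le_div_of_nonneg_right (truncatedMoment_le_mul_add v hw hu0 hu1 x) hN

end TruncatedMoment

lemma abs_sub_sub_one_div_le_quarter {m ℓ : ℝ} (hm : 2 ≤ m) (hℓ0 : 0 ≤ ℓ) (hℓm : ℓ ≤ m) :
    |(m - ℓ - 1) / (4 * (m - 1))| ≤ 1 / 4 := by
  rw [abs_div, abs_of_pos (by linarith : 0 < 4 * (m - 1)), div_le_iff₀ (by linarith), abs_le]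
  constructor <;> linarith

lemma exponent_mul_add_le {c s g gu u t : ℝ} (hc : |c| ≤ 1 / 4) (hu0 : 0 ≤ u) (hu1 : u ≤ 1)
    (hgu0 : 0 ≤ gu) (hgu : gu ≤ g) (hg : g ≤ 4 * s) (hgd : g ≤ gu + (1 - u) * (4 * s)) :
    -(c * (t * u) ^ 2 * (s - gu / 4)) + -(1 - u ^ 2) * s * t ^ 2 / 2 ≤
      -(c * t ^ 2 * (s - g / 4)) := by
  obtain ⟨hc1, hc2⟩ := abs_le.mp hc
  have hs : 0 ≤ s := by linarith
  have hu2 : 0 ≤ 1 - u ^ 2 := by nlinarith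
  have gap : -(c * (g - gu) / 4) ≤ (1 - u ^ 2) * s / 4 := by
    nlinarith [mul_nonneg (mul_nonneg hu0 (sub_nonneg.2 hu1)) hs,
      mul_nonneg (by linarith : 0 ≤ 1 / 4 + c) (by linarith : 0 ≤ g - gu)]
  have level : c * (1 - u ^ 2) * (s - gu / 4) ≤ (1 - u ^ 2) * s / 4 := by
    nlinarith [mul_nonneg (mul_nonneg (by linarith : 0 ≤ 1 / 4 - c)
      (by linarith : 0 ≤ s - gu / 4)) hu2, mul_nonneg hu2 hgu0]
  have key : c * ((s - g / 4) - u ^ 2 * (s - gu / 4)) ≤ (1 - u ^ 2) * s / 2 := by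
    linarith
  nlinarith [mul_le_mul_of_nonneg_left key (sq_nonneg t)]

lemma min_one_exp_mul_exp_le {a b d : ℝ} (hb : b ≤ 0) (h : a + b ≤ d) :
    min 1 (Real.exp a) * Real.exp b ≤ min 1 (Real.exp d) := by
  refine le_min ?_ ?_
  · exact mul_le_one₀ (min_le_left _ _) (Real.exp_nonneg b) (Real.exp_le_one_iff.mpr hb)
  · calc min 1 (Real.exp a) * Real.exp b ≤ Real.exp a * Real.exp b :=
          mul_le_mul_of_nonneg_right (min_le_right _ _) (Real.exp_nonneg b)
      _ = Real.exp (a + b) := (Real.exp_add a b).symm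
      _ ≤ Real.exp d := Real.exp_le_exp.mpr h

theorem stmt_10_general
    (n : ℕ) (hn : 2 ≤ n)
    (b : Fin n → Fin n → Fin n → Fin n → ℝ)
    (σ2 : ℝ)
    (hσ2 : σ2 = (∑ j, ∑ k, ∑ r, ∑ s,
      if j ≠ k ∧ r ≠ s then (b j k r s) ^ 2 else 0)
      / (4 * (n : ℝ) ^ 2 * ((n : ℝ) - 1)))
    (γ : ℝ → ℝ)
    (hγ : ∀ x, γ x = (∑ j, ∑ k, ∑ r, ∑ s,
      if j ≠ k ∧ r ≠ s then (b j k r s) ^ 2 * min 1 |x * b j k r s| else 0)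
      / ((n : ℝ) ^ 2 * ((n : ℝ) - 1)))
    (κ : ℝ)
    (h : ℝ → ℝ → ℝ)
    (hh : ∀ ℓ t, h ℓ t =
      min 1 (Real.exp (ℓ - ((n : ℝ) - ℓ - 1) / (4 * ((n : ℝ) - 1)) * t ^ 2 *
        (σ2 - γ (2 * κ * t) / 4))) * (if ℓ ≤ (n : ℝ) then 1 else 0))
    (ℓ : ℝ) (hℓ : 0 ≤ ℓ) (t : ℝ) (u : ℝ) (hu : u ∈ Set.Icc (0 : ℝ) 1) :
    h ℓ (t * u) * Real.exp (-(1 - u ^ 2) * σ2 * t ^ 2 / 2) ≤ h ℓ t := by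
  obtain ⟨hu0, hu1⟩ := hu
  by_cases hℓn : ℓ ≤ (n : ℝ)
  swap
  · simp [hh, hℓn]
  have hn' : (2 : ℝ) ≤ n := by exact_mod_cast hn
  set N := (n : ℝ) ^ 2 * ((n : ℝ) - 1)
  let w : Fin n × Fin n × Fin n × Fin n → ℝ := fun i =>
    if i.1 ≠ i.2.1 ∧ i.2.2.1 ≠ i.2.2.2 then b i.1 i.2.1 i.2.2.1 i.2.2.2 ^ 2 else 0
  have hw : 0 ≤ w := fun i => by dsimp only [w]; split_ifs <;> positivity
  have hγw : ∀ x, γ x = truncatedMoment w (fun i => b i.1 i.2.1 i.2.2.1 i.2.2.2) x / N :=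
    fun x => by simp only [hγ, truncatedMoment, Fintype.sum_prod_type, w, ite_mul, zero_mul]
  have hσw : 4 * σ2 = (∑ i, w i) / N := by
    rw [hσ2, mul_div_assoc', mul_assoc 4 _ (_ - 1), mul_div_mul_left _ _ four_ne_zero]
    simp only [Fintype.sum_prod_type, w, N]
  obtain ⟨hgu0, hgu, hg, hgd⟩ := truncatedMoment_div_bounds _ hw
    (mul_nonneg (sq_nonneg _) (by linarith)) hγw hσw hu0 hu1 (2 * κ * t)
  rw [hh, hh, if_pos hℓn, mul_one, mul_one, show 2 * κ * (t * u) = 2 * κ * t * u by ring]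
  refine min_one_exp_mul_exp_le ?_ ?_
  · have : 0 ≤ (1 - u ^ 2) * σ2 * t ^ 2 :=
      mul_nonneg (mul_nonneg (by nlinarith) (by linarith)) (sq_nonneg t)
    linarith
  · linarith [exponent_mul_add_le (t := t) (abs_sub_sub_one_div_le_quarter hn' hℓ hℓn)
      hu0 hu1 hgu0 hgu hg hgd]

/-- `h_ℓ(tu) exp(−(1−u²)σ²t²/2) ≤ h_ℓ(t)` for `ℓ ≥ 0`, `u ∈ [0,1]`. -/
theorem stmt_10
    (n : ℕ) (hn : 2 ≤ n) (a : Fin n → Fin n → ℝ)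
    (b : Fin n → Fin n → Fin n → Fin n → ℝ)
    (hb : ∀ j k r s, b j k r s = a j r - a k r - a j s + a k s)
    (σ2 : ℝ)
    (hσ2 : σ2 = (∑ j, ∑ k, ∑ r, ∑ s,
      if j ≠ k ∧ r ≠ s then (b j k r s) ^ 2 else 0)
      / (4 * (n : ℝ) ^ 2 * ((n : ℝ) - 1)))
    (hσ2pos : 0 < σ2)
    (γ : ℝ → ℝ)
    (hγ : ∀ x, γ x = (∑ j, ∑ k, ∑ r, ∑ s,
      if j ≠ k ∧ r ≠ s then (b j k r s) ^ 2 * min 1 |x * b j k r s| else 0)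
      / ((n : ℝ) ^ 2 * ((n : ℝ) - 1)))
    (κ : ℝ)
    (hκ : κ = sSup {y : ℝ | ∃ x : ℝ, x ≠ 0 ∧
      y = (Real.cos x - 1 + x ^ 2 / 2) / |x| ^ 3})
    (h : ℝ → ℝ → ℝ)
    (hh : ∀ ℓ t, h ℓ t =
      min 1 (Real.exp (ℓ - ((n : ℝ) - ℓ - 1) / (4 * ((n : ℝ) - 1)) * t ^ 2 *
        (σ2 - γ (2 * κ * t) / 4))) * (if ℓ ≤ (n : ℝ) then 1 else 0))
    (ℓ : ℝ) (hℓ : 0 ≤ ℓ) (t : ℝ) (u : ℝ) (hu : u ∈ Set.Icc (0 : ℝ) 1) :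
    h ℓ (t * u) * Real.exp (-(1 - u ^ 2) * σ2 * t ^ 2 / 2) ≤ h ℓ t :=
  stmt_10_general n hn b σ2 hσ2 γ hγ κ h hh ℓ hℓ t u hu
end

section
/- Let c ∈ (0, 1/2), c̃ = √(1−2c), and x ∈ ℝ. Then ∫₀^∞ ∫₀¹ t u γ(x t u) exp(−c t²u² − (1−u²)t²/2) du dt ≤ ((−log(2c))/(2c̃²)) · γ( (√π x / (−log(2c)√c)) · (1 − (√(2c)/c̃)·arcsin(c̃)) ). -/
/-!
For `s ≥ 0` the map `s ↦ γ (x * s)` is concave, being a nonnegative combination of the maps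
`s ↦ min 1 (|x b| s)`. The left-hand side integrates `γ (x t u)` against the positive weight
`w (t, u) = t u exp (-(1 - c̃² u²) t² / 2)` on `(0, ∞) × (0, 1]`, so by Jensen's inequality it is
at most `(∫ w) γ (x (∫ w t u) / ∫ w)`. Integrating out `t` with the Gaussian moments
`∫ t e^{-β t²} = 1 / (2β)` and `∫ t² e^{-β t²} = √π / (4 β^{3/2})` leaves elementary integrals
in `u`: `∫ w = -log (2c) / (2 c̃²)` and `∫ w t u = √(π/2) (1 / (c̃² √(2c)) - arcsin c̃ / c̃³)`.
-/

open MeasureTheory Real Set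

theorem ConcaveOn.integral_mul_comp_le {α : Type*} [MeasurableSpace α] {μ : Measure α}
    {s : Set ℝ} {g : ℝ → ℝ} {w f : α → ℝ} (hg : ConcaveOn ℝ s g) (hgc : ContinuousOn g s)
    (hsc : IsClosed s) (hw : 0 ≤ᵐ[μ] w) (hwi : Integrable w μ) (hw0 : 0 < ∫ a, w a ∂μ)
    (hfs : ∀ᵐ a ∂μ, f a ∈ s) (hwf : Integrable (fun a => w a * f a) μ)
    (hwg : Integrable (fun a => w a * g (f a)) μ) :
    ∫ a, w a * g (f a) ∂μ ≤ (∫ a, w a ∂μ) * g ((∫ a, w a * f a ∂μ) / ∫ a, w a ∂μ) := by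
  set ν := μ.withDensity fun a => ENNReal.ofReal (w a)
  have hdens : AEMeasurable (fun a => ENNReal.ofReal (w a)) μ := hwi.1.aemeasurable.ennreal_ofReal
  have hfin : ∀ᵐ a ∂μ, ENNReal.ofReal (w a) < ⊤ := ae_of_all _ fun _ => ENNReal.ofReal_lt_top
  have htoReal : ∀ᵐ a ∂μ, (ENNReal.ofReal (w a)).toReal = w a :=
    hw.mono fun a ha => ENNReal.toReal_ofReal ha
  have hint : ∀ h : α → ℝ, ∫ a, h a ∂ν = ∫ a, w a * h a ∂μ := fun h => by
    rw [integral_withDensity_eq_integral_toReal_smul₀ hdens hfin]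
    exact integral_congr_ae (htoReal.mono fun a ha => by simp [ha])
  have hintegrable : ∀ h : α → ℝ, Integrable h ν ↔ Integrable (fun a => w a * h a) μ := fun h => by
    rw [integrable_withDensity_iff_integrable_smul₀' hdens hfin]
    exact integrable_congr (htoReal.mono fun a ha => by simp [ha])
  have hmass : ν univ = ENNReal.ofReal (∫ a, w a ∂μ) := by
    rw [withDensity_apply _ MeasurableSet.univ, Measure.restrict_univ,
      ofReal_integral_eq_lintegral_ofReal hwi hw]
  have : IsFiniteMeasure ν := ⟨by rw [hmass]; exact ENNReal.ofReal_lt_top⟩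
  have : NeZero ν := ⟨fun h => by
    have := congrArg (· univ) h
    simp only [hmass, Measure.coe_zero, Pi.zero_apply, ENNReal.ofReal_eq_zero] at this
    linarith⟩
  have hmass' : ν.real univ = ∫ a, w a ∂μ := by
    rw [measureReal_def, hmass, ENNReal.toReal_ofReal hw0.le]
  have key := hg.le_map_average hgc hsc (withDensity_absolutelyContinuous μ _ |>.ae_le hfs)
    ((hintegrable f).2 hwf) ((hintegrable (g ∘ f)).2 hwg)
  rw [average_eq, average_eq, hmass', hint, hint, smul_eq_mul, smul_eq_mul,
    inv_mul_le_iff₀ hw0] at key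
  simpa [div_eq_inv_mul] using key

theorem concaveOn_finsetSum {ι E : Type*} [AddCommGroup E] [Module ℝ E] {s : Set E}
    (hs : Convex ℝ s) (t : Finset ι) {f : ι → E → ℝ} (hf : ∀ i ∈ t, ConcaveOn ℝ s (f i)) :
    ConcaveOn ℝ s fun x => ∑ i ∈ t, f i x := by
  classical
  induction t using Finset.induction_on with
  | empty => simpa using concaveOn_const 0 hs
  | insert i t hi ih =>
    simp only [Finset.sum_insert hi]
    exact (hf i (t.mem_insert_self i)).add (ih fun j hj => hf j (Finset.mem_insert_of_mem hj))

theorem concaveOn_min_one_abs_mul (a : ℝ) : ConcaveOn ℝ (Ici 0) fun s => min 1 |a * s| := by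
  refine ((concaveOn_const 1 (convex_Ici 0)).inf
    ((concaveOn_id (convex_Ici 0)).smul (abs_nonneg a))).congr fun s hs => ?_
  simp [abs_mul, abs_of_nonneg (mem_Ici.mp hs)]

lemma natCast_sq_mul_sub_one_nonneg (n : ℕ) : 0 ≤ (n : ℝ) ^ 2 * ((n : ℝ) - 1) := by
  rcases n with _ | n
  · simp
  · rw [Nat.cast_succ, add_sub_cancel_right]; positivity

noncomputable def truncSecondMoment {n : ℕ} (b : Fin n → Fin n → Fin n → Fin n → ℝ) (x : ℝ) :
    ℝ :=
  (∑ j, ∑ k, ∑ r, ∑ s, if j ≠ k ∧ r ≠ s then (b j k r s) ^ 2 * min 1 |x * b j k r s| else 0)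
    / ((n : ℝ) ^ 2 * ((n : ℝ) - 1))

section truncSecondMoment

variable {n : ℕ} (b : Fin n → Fin n → Fin n → Fin n → ℝ)

theorem concaveOn_truncSecondMoment_mul (x : ℝ) :
    ConcaveOn ℝ (Ici 0) fun s => truncSecondMoment b (x * s) := by
  simp only [truncSecondMoment, div_eq_inv_mul]
  refine ConcaveOn.smul (inv_nonneg.2 (natCast_sq_mul_sub_one_nonneg n)) ?_
  refine concaveOn_finsetSum (convex_Ici 0) _ fun j _ => ?_
  refine concaveOn_finsetSum (convex_Ici 0) _ fun k _ => ?_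
  refine concaveOn_finsetSum (convex_Ici 0) _ fun r _ => ?_
  refine concaveOn_finsetSum (convex_Ici 0) _ fun s _ => ?_
  split_ifs
  · refine ((concaveOn_min_one_abs_mul (x * b j k r s)).smul (sq_nonneg (b j k r s))).congr
      fun y _ => ?_
    simp only [smul_eq_mul]; ring_nf
  · exact concaveOn_const 0 (convex_Ici 0)

@[fun_prop]
theorem continuous_truncSecondMoment : Continuous (truncSecondMoment b) := by
  refine Continuous.div_const (continuous_finsetSum _ fun j _ => continuous_finsetSum _
    fun k _ => continuous_finsetSum _ fun r _ => continuous_finsetSum _ fun s _ => ?_) _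
  split_ifs <;> fun_prop

lemma truncSecondMoment_nonneg (x : ℝ) : 0 ≤ truncSecondMoment b x := by
  unfold truncSecondMoment
  refine div_nonneg (Finset.sum_nonneg fun j _ => Finset.sum_nonneg fun k _ =>
    Finset.sum_nonneg fun r _ => Finset.sum_nonneg fun s _ => ?_) (natCast_sq_mul_sub_one_nonneg n)
  split_ifs <;> positivity

theorem norm_truncSecondMoment_le (x : ℝ) :
    ‖truncSecondMoment b x‖ ≤
      (∑ j, ∑ k, ∑ r, ∑ s, b j k r s ^ 2) / ((n : ℝ) ^ 2 * ((n : ℝ) - 1)) := by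
  rw [norm_of_nonneg (truncSecondMoment_nonneg b x), truncSecondMoment]
  gcongr with j _ k _ r _ s _
  · exact natCast_sq_mul_sub_one_nonneg n
  split_ifs
  · exact mul_le_of_le_one_right (sq_nonneg _) (min_le_left _ _)
  · exact sq_nonneg _

end truncSecondMoment

theorem integral_Ioi_pow_mul_exp_neg_mul_sq (m : ℕ) {b : ℝ} (hb : 0 < b) :
    ∫ t in Ioi (0 : ℝ), t ^ m * exp (-b * t ^ 2) =
      b ^ (-((m : ℝ) + 1) / 2) * (1 / 2) * Gamma (((m : ℝ) + 1) / 2) := by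
  rw [← integral_rpow_mul_exp_neg_mul_rpow two_pos (by linarith [m.cast_nonneg (α := ℝ)]) hb]
  refine setIntegral_congr_fun measurableSet_Ioi fun t _ => ?_
  norm_cast

theorem integral_Ioi_mul_exp_neg_mul_sq {b : ℝ} (hb : 0 < b) :
    ∫ t in Ioi (0 : ℝ), t * exp (-b * t ^ 2) = (2 * b)⁻¹ := by
  have := integral_Ioi_pow_mul_exp_neg_mul_sq 1 hb
  norm_num [Real.rpow_neg_one] at this
  simp_rw [neg_mul, this]; ring

theorem integral_Ioi_sq_mul_exp_neg_mul_sq {b : ℝ} (hb : 0 < b) :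
    ∫ t in Ioi (0 : ℝ), t ^ 2 * exp (-b * t ^ 2) = √π / (4 * b * √b) := by
  rw [integral_Ioi_pow_mul_exp_neg_mul_sq 2 hb]
  have hΓ : Gamma (3 / 2) = √π / 2 := by
    rw [show (3 / 2 : ℝ) = 1 / 2 + 1 by norm_num, Gamma_add_one (by norm_num), Gamma_one_half_eq]
    ring
  have hpow : b ^ (-(3 : ℝ) / 2) = (b * √b)⁻¹ := by
    rw [sqrt_eq_rpow, ← rpow_one_add' hb.le (by norm_num), ← rpow_neg hb.le]
    norm_num
  push_cast
  rw [show ((2 : ℝ) + 1) = 3 by norm_num, hΓ, hpow]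
  field_simp
  norm_num

lemma one_sub_sq_mul_sq_pos {k u : ℝ} (hk : k ^ 2 < 1) (hu : u ∈ uIcc (0 : ℝ) 1) :
    0 < 1 - k ^ 2 * u ^ 2 := by
  rw [uIcc_of_le zero_le_one] at hu
  nlinarith [mul_le_mul_of_nonneg_left (pow_le_one₀ hu.1 hu.2 : u ^ 2 ≤ 1) (sq_nonneg k)]

theorem integral_div_one_sub_sq_mul_sq {k : ℝ} (hk0 : k ≠ 0) (hk : k ^ 2 < 1) :
    ∫ u in (0 : ℝ)..1, u / (1 - k ^ 2 * u ^ 2) = -log (1 - k ^ 2) / (2 * k ^ 2) := by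
  have hderiv : ∀ u ∈ uIcc (0 : ℝ) 1,
      HasDerivAt (fun u => -log (1 - k ^ 2 * u ^ 2) / (2 * k ^ 2)) (u / (1 - k ^ 2 * u ^ 2)) u := by
    intro u hu
    have := ((((hasDerivAt_pow 2 u).const_mul (k ^ 2)).const_sub 1).log
      (one_sub_sq_mul_sq_pos hk hu).ne').neg.div_const (2 * k ^ 2)
    refine this.congr_deriv ?_
    field_simp
    ring
  have hcont : ContinuousOn (fun u => u / (1 - k ^ 2 * u ^ 2)) (uIcc 0 1) :=
    continuousOn_id.div (by fun_prop) fun u hu => (one_sub_sq_mul_sq_pos hk hu).ne'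
  rw [intervalIntegral.integral_eq_sub_of_hasDerivAt hderiv (hcont.intervalIntegrable)]
  simp

theorem integral_sq_div_one_sub_sq_mul_sq_mul_sqrt {k : ℝ} (hk0 : k ≠ 0) (hk : k ^ 2 < 1) :
    ∫ u in (0 : ℝ)..1, u ^ 2 / ((1 - k ^ 2 * u ^ 2) * √(1 - k ^ 2 * u ^ 2)) =
      1 / (k ^ 2 * √(1 - k ^ 2)) - arcsin k / k ^ 3 := by
  have hderiv : ∀ u ∈ uIcc (0 : ℝ) 1,
      HasDerivAt (fun u => u / (k ^ 2 * √(1 - k ^ 2 * u ^ 2)) - arcsin (k * u) / k ^ 3)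
        (u ^ 2 / ((1 - k ^ 2 * u ^ 2) * √(1 - k ^ 2 * u ^ 2))) u := by
    intro u hu
    have hq := one_sub_sq_mul_sq_pos hk hu
    have hsq : 0 < √(1 - k ^ 2 * u ^ 2) := sqrt_pos.2 hq
    have hku : (k * u) ^ 2 < 1 := by rw [mul_pow]; linarith
    have hku1 : k * u ≠ 1 := fun h => by rw [h] at hku; norm_num at hku
    have hku2 : k * u ≠ -1 := fun h => by rw [h] at hku; norm_num at hku
    have hsqrt := (((hasDerivAt_pow 2 u).const_mul (k ^ 2)).const_sub 1).sqrt hq.ne'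
    have harcsin := (hasDerivAt_arcsin hku2 hku1).comp u ((hasDerivAt_id u).const_mul k)
    have := ((hasDerivAt_id u).div (hsqrt.const_mul (k ^ 2)) (by positivity)).sub
      (harcsin.div_const (k ^ 3))
    refine this.congr_deriv ?_
    rw [show 1 - (k * u) ^ 2 = 1 - k ^ 2 * u ^ 2 by ring]
    simp only [id]
    field_simp
    rw [sq_sqrt hq.le]
    ring
  have hcont : ContinuousOn (fun u => u ^ 2 / ((1 - k ^ 2 * u ^ 2) * √(1 - k ^ 2 * u ^ 2)))
      (uIcc 0 1) :=
    (continuousOn_pow 2).div (by fun_prop) fun u hu =>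
      (mul_pos (one_sub_sq_mul_sq_pos hk hu) (sqrt_pos.2 (one_sub_sq_mul_sq_pos hk hu))).ne'
  rw [intervalIntegral.integral_eq_sub_of_hasDerivAt hderiv (hcont.intervalIntegrable)]
  simp

noncomputable def gaussWeight (c : ℝ) (p : ℝ × ℝ) : ℝ :=
  p.1 * p.2 * exp (-(c * p.1 ^ 2 * p.2 ^ 2) - (1 - p.2 ^ 2) * p.1 ^ 2 / 2)

local notation "μₛ" => Measure.prod (volume.restrict (Ioi (0 : ℝ))) (volume.restrict (Ioc (0 : ℝ) 1))

section gaussWeight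

variable {c : ℝ}

lemma gaussWeight_mul_pow (m : ℕ) (t u : ℝ) :
    gaussWeight c (t, u) * (t * u) ^ m =
      u ^ (m + 1) * (t ^ (m + 1) * exp (-((1 - (1 - 2 * c) * u ^ 2) / 2) * t ^ 2)) := by
  rw [gaussWeight, show -(c * t ^ 2 * u ^ 2) - (1 - u ^ 2) * t ^ 2 / 2 =
    -((1 - (1 - 2 * c) * u ^ 2) / 2) * t ^ 2 by ring]
  ring

lemma continuous_gaussWeight : Continuous (gaussWeight c) := by
  unfold gaussWeight; fun_prop

lemma ae_mem_Ioi_prod_Ioc : ∀ᵐ p ∂μₛ, p ∈ Ioi 0 ×ˢ Ioc 0 1 := by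
  rw [Measure.prod_restrict, ae_restrict_iff' (measurableSet_Ioi.prod measurableSet_Ioc)]
  exact ae_of_all _ fun _ => id

lemma gaussWeight_nonneg {p : ℝ × ℝ} (hp : p ∈ Ioi 0 ×ˢ Ioc 0 1) : 0 ≤ gaussWeight c p :=
  mul_nonneg (mul_nonneg (le_of_lt hp.1) hp.2.1.le) (exp_pos _).le

theorem integrable_gaussWeight_mul_pow (hc : 0 < c) (m : ℕ) :
    Integrable (fun p => gaussWeight c p * (p.1 * p.2) ^ m) μₛ := by
  set a := min c (1 / 2)
  have ha : 0 < a := lt_min hc one_half_pos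
  have hdom : IntegrableOn (fun t : ℝ => t ^ (m + 1) * exp (-a * t ^ 2)) (Ioi 0) := by
    refine (integrableOn_rpow_mul_exp_neg_mul_sq ha (s := (m + 1 : ℕ))
      (neg_one_lt_zero.trans_le (Nat.cast_nonneg _))).congr_fun
      (fun t _ => ?_) measurableSet_Ioi
    norm_cast
  refine Integrable.mono' (hdom.mul_prod (integrable_const (1 : ℝ)))
    (continuous_gaussWeight.mul (by fun_prop)).aestronglyMeasurable ?_
  filter_upwards [ae_mem_Ioi_prod_Ioc] with ⟨t, u⟩ ⟨ht, hu0, hu1⟩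
  have ht : 0 < t := ht
  have hexp : -((1 - (1 - 2 * c) * u ^ 2) / 2) * t ^ 2 ≤ -a * t ^ 2 := by
    have hu2 : u ^ 2 ≤ 1 := pow_le_one₀ hu0.le hu1
    have : a ≤ (1 - (1 - 2 * c) * u ^ 2) / 2 := by
      nlinarith [min_le_left c (1 / 2), min_le_right c (1 / 2), sq_nonneg u]
    nlinarith [sq_nonneg t]
  rw [gaussWeight_mul_pow, norm_of_nonneg (by positivity), mul_one]
  calc u ^ (m + 1) * (t ^ (m + 1) * exp (-((1 - (1 - 2 * c) * u ^ 2) / 2) * t ^ 2))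
      ≤ 1 * (t ^ (m + 1) * exp (-a * t ^ 2)) := by
        gcongr
        exact pow_le_one₀ hu0.le hu1
    _ = _ := one_mul _

theorem integrable_gaussWeight (hc : 0 < c) : Integrable (gaussWeight c) μₛ := by
  simpa using integrable_gaussWeight_mul_pow hc 0

theorem integrable_gaussWeight_mul (hc : 0 < c) :
    Integrable (fun p => gaussWeight c p * (p.1 * p.2)) μₛ := by
  simpa using integrable_gaussWeight_mul_pow hc 1

theorem integrable_gaussWeight_mul_comp (hc : 0 < c) {g : ℝ → ℝ} (hg : Continuous g) {C : ℝ}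
    (hC : ∀ s, ‖g s‖ ≤ C) : Integrable (fun p => gaussWeight c p * g (p.1 * p.2)) μₛ :=
  (integrable_gaussWeight hc).mul_bdd (by fun_prop) (ae_of_all _ fun p => hC _)

theorem setIntegral_intervalIntegral_eq_integral_gaussWeight_mul {g : ℝ → ℝ}
    (hg : Integrable (fun p => gaussWeight c p * g (p.1 * p.2)) μₛ) :
    ∫ t in Ioi (0 : ℝ), ∫ u in (0 : ℝ)..1,
        t * u * g (t * u) * exp (-(c * t ^ 2 * u ^ 2) - (1 - u ^ 2) * t ^ 2 / 2) =
      ∫ p, gaussWeight c p * g (p.1 * p.2) ∂μₛ := by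
  rw [integral_prod _ hg]
  refine setIntegral_congr_fun measurableSet_Ioi fun t _ => ?_
  rw [intervalIntegral.integral_of_le zero_le_one]
  refine integral_congr_ae (ae_of_all _ fun u => ?_)
  simp only [gaussWeight]
  ring

theorem integral_gaussWeight_mul_pow (hc : 0 < c) (m : ℕ) :
    ∫ p, gaussWeight c p * (p.1 * p.2) ^ m ∂μₛ =
      ∫ u in (0 : ℝ)..1, u ^ (m + 1) *
        ∫ t in Ioi (0 : ℝ), t ^ (m + 1) * exp (-((1 - (1 - 2 * c) * u ^ 2) / 2) * t ^ 2) := by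
  rw [integral_prod_symm _ (integrable_gaussWeight_mul_pow hc m),
    intervalIntegral.integral_of_le zero_le_one]
  simp_rw [gaussWeight_mul_pow, integral_const_mul]

variable {k : ℝ}

theorem integral_gaussWeight (hc : 0 < c) (hk0 : k ≠ 0) (hk : k ^ 2 = 1 - 2 * c) :
    ∫ p, gaussWeight c p ∂μₛ = -log (2 * c) / (2 * k ^ 2) := by
  have hk1 : k ^ 2 < 1 := by linarith
  have := integral_gaussWeight_mul_pow hc 0
  simp only [pow_zero, mul_one, zero_add, pow_one, ← hk] at this
  rw [this, show 2 * c = 1 - k ^ 2 by linarith, ← integral_div_one_sub_sq_mul_sq hk0 hk1]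
  refine intervalIntegral.integral_congr fun u hu => ?_
  have hq := one_sub_sq_mul_sq_pos hk1 hu
  rw [integral_Ioi_mul_exp_neg_mul_sq (by linarith)]
  field_simp

theorem integral_gaussWeight_mul (hc : 0 < c) (hk0 : k ≠ 0) (hk : k ^ 2 = 1 - 2 * c) :
    ∫ p, gaussWeight c p * (p.1 * p.2) ∂μₛ =
      √π / √2 * (1 / (k ^ 2 * √(2 * c)) - arcsin k / k ^ 3) := by
  have hk1 : k ^ 2 < 1 := by linarith
  have := integral_gaussWeight_mul_pow hc 1
  simp only [pow_one, one_add_one_eq_two, ← hk] at this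
  rw [this, show 2 * c = 1 - k ^ 2 by linarith,
    ← integral_sq_div_one_sub_sq_mul_sq_mul_sqrt hk0 hk1, ← intervalIntegral.integral_const_mul]
  refine intervalIntegral.integral_congr fun u hu => ?_
  have hq := one_sub_sq_mul_sq_pos hk1 hu
  rw [integral_Ioi_sq_mul_exp_neg_mul_sq (by linarith), sqrt_div' _ zero_le_two]
  field_simp
  rw [sq_sqrt zero_le_two]
  ring

theorem integral_gaussWeight_mul_div_integral_gaussWeight (hc : 0 < c) (hk0 : k ≠ 0)
    (hk : k ^ 2 = 1 - 2 * c) :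
    (∫ p, gaussWeight c p * (p.1 * p.2) ∂μₛ) / ∫ p, gaussWeight c p ∂μₛ =
      √π / (-log (2 * c) * √c) * (1 - √(2 * c) / k * arcsin k) := by
  have hlog : log (2 * c) ≠ 0 := log_ne_zero_of_pos_of_ne_one (by linarith) fun h =>
    hk0 (pow_eq_zero_iff two_ne_zero |>.1 (by linarith))
  rw [integral_gaussWeight_mul hc hk0 hk, integral_gaussWeight hc hk0 hk, sqrt_mul zero_le_two]
  field_simp
  rw [sq_sqrt zero_le_two]
  ring

end gaussWeight

theorem stmt_11_general
    (n : ℕ) (b : Fin n → Fin n → Fin n → Fin n → ℝ)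
    (γ : ℝ → ℝ)
    (hγ : ∀ x, γ x = (∑ j, ∑ k, ∑ r, ∑ s,
      if j ≠ k ∧ r ≠ s then (b j k r s) ^ 2 * min 1 |x * b j k r s| else 0)
      / ((n : ℝ) ^ 2 * ((n : ℝ) - 1)))
    (c : ℝ) (hc : c ∈ Set.Ioo (0 : ℝ) (1 / 2))
    (ctil : ℝ) (hctil : ctil = Real.sqrt (1 - 2 * c))
    (x : ℝ) :
    (∫ t in Set.Ioi (0 : ℝ), ∫ u in (0:ℝ)..1,
        t * u * γ (x * t * u) * Real.exp (-(c * t ^ 2 * u ^ 2) - (1 - u ^ 2) * t ^ 2 / 2)) ≤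
      -Real.log (2 * c) / (2 * ctil ^ 2) *
        γ (Real.sqrt Real.pi * x / (-Real.log (2 * c) * Real.sqrt c) *
          (1 - Real.sqrt (2 * c) / ctil * Real.arcsin ctil)) := by
  obtain ⟨hc0, hc1⟩ := hc
  obtain rfl : γ = truncSecondMoment b := funext hγ
  have hk : ctil ^ 2 = 1 - 2 * c := by rw [hctil, sq_sqrt (by linarith)]
  have hk0 : ctil ≠ 0 := by rw [hctil]; exact (sqrt_pos.2 (by linarith)).ne'
  have hmass : 0 < ∫ p, gaussWeight c p ∂μₛ := by
    rw [integral_gaussWeight hc0 hk0 hk]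
    exact div_pos (neg_pos.2 (log_neg (by linarith) (by linarith))) (by positivity)
  have hγ_cont : Continuous fun s => truncSecondMoment b (x * s) := by fun_prop
  have hγ_int := integrable_gaussWeight_mul_comp hc0 hγ_cont fun s =>
    norm_truncSecondMoment_le b (x * s)
  simp_rw [mul_assoc x]
  rw [← integral_gaussWeight hc0 hk0 hk, mul_comm √π x, mul_div_assoc x, mul_assoc x,
    ← integral_gaussWeight_mul_div_integral_gaussWeight hc0 hk0 hk]
  refine (setIntegral_intervalIntegral_eq_integral_gaussWeight_mul
    (g := fun s => truncSecondMoment b (x * s)) hγ_int).trans_le ?_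
  exact (concaveOn_truncSecondMoment_mul b x).integral_mul_comp_le
    hγ_cont.continuousOn isClosed_Ici
    (ae_mem_Ioi_prod_Ioc.mono fun p hp => gaussWeight_nonneg hp) (integrable_gaussWeight hc0)
    hmass (ae_mem_Ioi_prod_Ioc.mono fun p hp => mul_nonneg hp.1.le hp.2.1.le)
    (integrable_gaussWeight_mul hc0) hγ_int

/-- Lemma 6, inequality (15). -/
theorem stmt_11
    (n : ℕ) (hn : 2 ≤ n) (a : Fin n → Fin n → ℝ)
    (b : Fin n → Fin n → Fin n → Fin n → ℝ)
    (hb : ∀ j k r s, b j k r s = a j r - a k r - a j s + a k s)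
    (γ : ℝ → ℝ)
    (hγ : ∀ x, γ x = (∑ j, ∑ k, ∑ r, ∑ s,
      if j ≠ k ∧ r ≠ s then (b j k r s) ^ 2 * min 1 |x * b j k r s| else 0)
      / ((n : ℝ) ^ 2 * ((n : ℝ) - 1)))
    (c : ℝ) (hc : c ∈ Set.Ioo (0 : ℝ) (1 / 2))
    (ctil : ℝ) (hctil : ctil = Real.sqrt (1 - 2 * c))
    (x : ℝ) :
    (∫ t in Set.Ioi (0 : ℝ), ∫ u in (0:ℝ)..1,
        t * u * γ (x * t * u) * Real.exp (-(c * t ^ 2 * u ^ 2) - (1 - u ^ 2) * t ^ 2 / 2)) ≤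
      -Real.log (2 * c) / (2 * ctil ^ 2) *
        γ (Real.sqrt Real.pi * x / (-Real.log (2 * c) * Real.sqrt c) *
          (1 - Real.sqrt (2 * c) / ctil * Real.arcsin ctil)) :=
  stmt_11_general n b γ hγ c hc ctil hctil x
end

section
/- For every u ∈ [0,1]: Σ_r (c_r − α − uβ) e^{u c_r} = f(u), where the sum is over all permutations r of {1,…,n}, f(u) = f₁(u)/(4n) + f₂(u)/(n²(n−1)) + f₃(u)/(4n²(n−1)), f₁(u) = Σ_{(j,k), j≠k} Σ_r z_{j,k,r(j),r(k)} (1 − u z_{j,k,r(j),r(k)} − exp(−u z_{j,k,r(j),r(k)})) e^{u c_r}, f₂(u) = Σ_{(j,k,ℓ) pairwise distinct} Σ_r u z_{j,k,r(j),r(k)}² (1 − exp(u z_{j,ℓ,r(ℓ),r(j)})) e^{u c_r}, and f₃(u) = Σ_{(j,k,ℓ,m) pairwise distinct} Σ_r u z_{j,k,r(j),r(k)}² (1 − exp(u z_{j,ℓ,r(ℓ),r(j)} + u z_{k,m,r(m),r(k)})) e^{u c_r}. -/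
/-!
Write `e π = exp (u * c π)`. Since `∑ j, ∑ k, z j k (π j) (π k) = 2 n (c π - α)`, the sum
`∑ π, (c π - α) e π` splits into the sums `∑ π, z j k (π j) (π k) e π`; composing `π` with the
transposition `swap j k` negates `z j k (π j) (π k)` and multiplies `e π` by
`exp (-u z j k (π j) (π k))`, so each of them is half of `∑ π, z (1 - exp (-u z)) e π`.
This gives `f₁` plus `u` times the sums `S j k = ∑ π, z j k (π j) (π k) ^ 2 e π`.

The `β` term is `∑ j k r s, z j k r s ^ 2 = 4 n ^ 2 (n - 1) β`, and
`(∑ r s, z j k r s ^ 2) * ∑ π, e π` is the sum over all `(l, m)` of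
`∑ π, z j k (π l) (π m) ^ 2 e π`. Composing `π` with `swap j l * swap k m` moves
`(π l, π m)` to `(π j, π k)` at the cost of the factor
`exp (u z j l (π l) (π j) + u z k m (π m) (π k))`, so each of these sums is `S j k` minus a
defect; sorting the index patterns of `(j, k, l, m)` collects the defects into `f₂` and `f₃`.
-/

open Finset Equiv Complex

section Combinatorics

variable {ι : Type*} [DecidableEq ι] {M : Type*} [AddCommMonoid M]

lemma ite_ite_zero_eq_add (p q : Prop) [Decidable p] [Decidable q] (a b : M) :
    (if p then (if q then a else b) else 0) =
      (if p ∧ q then a else 0) + (if p ∧ ¬q then b else 0) := by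
  by_cases p <;> by_cases q <;> simp [*]

lemma ite_offDiag_add_ite_offDiag_eq (H : ι → ι → ι → ι → M)
    (hdiag : ∀ j k, H j k j k = 0) (hswap : ∀ j k m, H j k j m = H k j m j) (j k l m : ι) :
    (if (j ≠ k ∧ l ≠ m) ∧ l ≠ k ∧ m ≠ j then H j k l m else 0) +
        (if (k ≠ j ∧ l ≠ m) ∧ ¬(l ≠ j ∧ m ≠ k) then H j k l m else 0) =
      (if m = k then (if j ≠ k ∧ j ≠ l ∧ k ≠ l then H j k l k else 0) else 0) +
        (if m = k then (if j ≠ k ∧ j ≠ l ∧ k ≠ l then H j k l k else 0) else 0) +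
        ((if l = j then (if k ≠ j ∧ k ≠ m ∧ j ≠ m then H k j m j else 0) else 0) +
          (if l = j then (if k ≠ j ∧ k ≠ m ∧ j ≠ m then H k j m j else 0) else 0)) +
        (if j ≠ k ∧ j ≠ l ∧ j ≠ m ∧ k ≠ l ∧ k ≠ m ∧ l ≠ m then H j k l m else 0) := by
  rcases eq_or_ne m k with rfl | hmk <;> rcases eq_or_ne l j with rfl | hlj
  · simp [hdiag]
  · by_cases hjm : j = m
    · subst hjm; simp
    by_cases hlm : l = m
    · subst hlm; simp
    simp [hjm, hlj, hlm, Ne.symm hjm, Ne.symm hlj, Ne.symm hlm]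
  · by_cases hkl : k = l
    · subst hkl; simp
    by_cases hlm : l = m
    · subst hlm; simp
    simp [hkl, hmk, hlm, Ne.symm hkl, Ne.symm hmk, Ne.symm hlm, hswap]
  · simp only [hmk, hlj, Ne.symm hmk, Ne.symm hlj, ne_eq, not_false_eq_true, and_true,
      true_and, not_true_eq_false, and_false, if_false, add_zero, zero_add]
    exact if_congr (by tauto) rfl rfl

variable [Fintype ι]

omit [DecidableEq ι] in
lemma sum_sum_sub_sq_of_sum_eq_zero {R : Type*} [CommRing R] (g : ι → R) (hg : ∑ i, g i = 0) :
    ∑ j, ∑ k, (g j - g k) ^ 2 = 2 * Fintype.card ι * ∑ j, g j ^ 2 := by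
  simp only [sub_sq, sum_add_distrib, sum_sub_distrib, sum_const, card_univ, nsmul_eq_mul,
    ← mul_sum, ← sum_mul, mul_assoc, hg]
  ring

lemma sum_offDiag_offDiag_eq (H : ι → ι → ι → ι → M)
    (hdiag : ∀ j k, H j k j k = 0) (hswap : ∀ j k m, H j k j m = H k j m j) :
    ∑ j, ∑ k, ∑ l, ∑ m,
        (if j ≠ k ∧ l ≠ m then (if l ≠ k ∧ m ≠ j then H j k l m else H k j l m) else 0) =
      4 • ∑ j, ∑ k, ∑ l, (if j ≠ k ∧ j ≠ l ∧ k ≠ l then H j k l k else 0) +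
        ∑ j, ∑ k, ∑ l, ∑ m,
          (if j ≠ k ∧ j ≠ l ∧ j ≠ m ∧ k ≠ l ∧ k ≠ m ∧ l ≠ m then H j k l m else 0) := by
  have hrelabel : ∑ j, ∑ k, ∑ l, ∑ m,
        (if (j ≠ k ∧ l ≠ m) ∧ ¬(l ≠ k ∧ m ≠ j) then H k j l m else 0) =
      ∑ j, ∑ k, ∑ l, ∑ m, (if (k ≠ j ∧ l ≠ m) ∧ ¬(l ≠ j ∧ m ≠ k) then H j k l m else 0) :=
    sum_comm
  have hcollapse : ∑ j, ∑ k, ∑ l, ∑ m,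
        (if l = j then (if k ≠ j ∧ k ≠ m ∧ j ≠ m then H k j m j else 0) else 0) =
      ∑ j, ∑ k, ∑ l, (if j ≠ k ∧ j ≠ l ∧ k ≠ l then H j k l k else 0) := by
    simp only [← ite_sum_zero, Fintype.sum_ite_eq']
    exact sum_comm
  simp only [ite_ite_zero_eq_add, sum_add_distrib]
  rw [hrelabel]
  simp only [← sum_add_distrib, ite_offDiag_add_ite_offDiag_eq H hdiag hswap]
  simp only [sum_add_distrib, Fintype.sum_ite_eq', hcollapse]
  abel

end Combinatorics

noncomputable section

namespace Hoeffding

variable {ι : Type*} (y : ι → ι → ℂ)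

def z (j k r s : ι) : ℂ := y j r - y k r - y j s + y k s

@[simp] lemma z_self_left (j r s : ι) : z y j j r s = 0 := by simp [z]

@[simp] lemma z_self_right (j k r : ι) : z y j k r r = 0 := by simp [z]

lemma z_swap_cols (j k r s : ι) : z y j k s r = -z y j k r s := by simp only [z]; ring

lemma z_swap_rows (j k r s : ι) : z y k j r s = -z y j k r s := by simp only [z]; ring

lemma z_swap_rows_cols (j k r s : ι) : z y k j s r = z y j k r s := by simp only [z]; ring

variable [Fintype ι]

def c (π : Perm ι) : ℂ := ∑ j, y j (π j)

lemma sum_sum_z_perm (π : Perm ι) :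
    ∑ j, ∑ k, z y j k (π j) (π k) = 2 * Fintype.card ι * c y π - 2 * ∑ j, ∑ r, y j r := by
  simp only [z, sum_add_distrib, sum_sub_distrib, sum_const, card_univ, nsmul_eq_mul, ← mul_sum]
  rw [sum_comm (f := fun j k => y k (π j))]
  simp only [Equiv.sum_comp π, c]
  ring

def ytil (j r : ι) : ℂ :=
  y j r - (∑ k, y k r) / Fintype.card ι - (∑ s, y j s) / Fintype.card ι +
    (∑ k, ∑ s, y k s) / (Fintype.card ι : ℂ) ^ 2

lemma sum_ytil_left [Nonempty ι] (r : ι) : ∑ j, ytil y j r = 0 := by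
  have hN : (Fintype.card ι : ℂ) ≠ 0 := Nat.cast_ne_zero.2 Fintype.card_ne_zero
  simp only [ytil, sum_add_distrib, sum_sub_distrib, sum_const, card_univ, nsmul_eq_mul,
    ← sum_div]
  field_simp
  ring

lemma sum_ytil_right [Nonempty ι] (j : ι) : ∑ r, ytil y j r = 0 := by
  have hN : (Fintype.card ι : ℂ) ≠ 0 := Nat.cast_ne_zero.2 Fintype.card_ne_zero
  simp only [ytil, sum_add_distrib, sum_sub_distrib, sum_const, card_univ, nsmul_eq_mul,
    ← sum_div]
  rw [sum_comm (f := fun r k => y k r)]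
  field_simp
  ring

lemma z_ytil (j k r s : ι) : z (ytil y) j k r s = z y j k r s := by
  simp only [z, ytil]
  ring

lemma sum_sq_z [Nonempty ι] :
    ∑ j, ∑ k, ∑ r, ∑ s, z y j k r s ^ 2 =
      4 * (Fintype.card ι : ℂ) ^ 2 * ∑ j, ∑ r, ytil y j r ^ 2 := by
  have hrows : ∀ j k, ∑ r, ∑ s, z y j k r s ^ 2 =
      2 * Fintype.card ι * ∑ r, (ytil y j r - ytil y k r) ^ 2 := by
    intro j k
    rw [← sum_sum_sub_sq_of_sum_eq_zero (fun r => ytil y j r - ytil y k r)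
      (by rw [sum_sub_distrib, sum_ytil_right, sum_ytil_right, sub_zero])]
    refine sum_congr rfl fun r _ => sum_congr rfl fun s _ => ?_
    rw [← z_ytil y, z]
    ring
  have hcols : ∀ r, ∑ j, ∑ k, (ytil y j r - ytil y k r) ^ 2 =
      2 * Fintype.card ι * ∑ j, ytil y j r ^ 2 :=
    fun r => sum_sum_sub_sq_of_sum_eq_zero (fun j => ytil y j r) (sum_ytil_left y r)
  calc ∑ j, ∑ k, ∑ r, ∑ s, z y j k r s ^ 2
      = 2 * Fintype.card ι * ∑ r, ∑ j, ∑ k, (ytil y j r - ytil y k r) ^ 2 := by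
        simp only [hrows, ← mul_sum]
        exact congrArg _ ((sum_congr rfl fun j _ => sum_comm).trans sum_comm)
    _ = 4 * (Fintype.card ι : ℂ) ^ 2 * ∑ j, ∑ r, ytil y j r ^ 2 := by
        simp only [hcols, ← mul_sum]
        rw [sum_comm]
        ring

variable [DecidableEq ι]

lemma c_mul_swap (π : Perm ι) (a b : ι) : c y (π * swap a b) = c y π - z y a b (π a) (π b) := by
  rcases eq_or_ne a b with rfl | hab
  · rw [swap_self, ← Perm.one_def, mul_one, z_self_left, sub_zero]
  have hdiff : c y (π * swap a b) - c y π = y a (π b) - y a (π a) + (y b (π a) - y b (π b)) := by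
    rw [c, c, ← sum_sub_distrib, Fintype.sum_eq_add a b hab]
    · simp
    · rintro x ⟨hxa, hxb⟩
      simp [swap_apply_of_ne_of_ne hxa hxb]
  rw [z]
  linear_combination hdiff

lemma c_mul_swap_mul_swap (π : Perm ι) {j k l m : ι} (hkj : k ≠ j) (hkl : k ≠ l)
    (hmj : m ≠ j) (hml : m ≠ l) :
    c y (π * (swap j l * swap k m)) = c y π - z y j l (π j) (π l) - z y k m (π k) (π m) := by
  rw [← mul_assoc, c_mul_swap, c_mul_swap, Perm.mul_apply, Perm.mul_apply,
    swap_apply_of_ne_of_ne hkj hkl, swap_apply_of_ne_of_ne hmj hml]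

variable (u : ℂ)

def tiltedSq (j k : ι) : ℂ := ∑ π : Perm ι, z y j k (π j) (π k) ^ 2 * exp (u * c y π)

def swapDefect (j k l m : ι) : ℂ :=
  ∑ π : Perm ι, z y j k (π j) (π k) ^ 2 *
    (1 - exp (u * z y j l (π l) (π j) + u * z y k m (π m) (π k))) * exp (u * c y π)

lemma two_mul_sum_z_mul_exp (j k : ι) :
    2 * ∑ π : Perm ι, z y j k (π j) (π k) * exp (u * c y π) =
      ∑ π : Perm ι, z y j k (π j) (π k) * (1 - exp (-(u * z y j k (π j) (π k)))) *
        exp (u * c y π) := by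
  have hswap : ∑ π : Perm ι, z y j k (π j) (π k) * exp (u * c y π) =
      ∑ π : Perm ι, -z y j k (π j) (π k) * exp (-(u * z y j k (π j) (π k))) *
        exp (u * c y π) := by
    rw [← Equiv.sum_comp (Equiv.mulRight (swap j k))]
    refine sum_congr rfl fun π _ => ?_
    simp only [coe_mulRight, Perm.mul_apply, swap_apply_left, swap_apply_right, c_mul_swap]
    rw [z_swap_cols, mul_sub, sub_eq_add_neg, exp_add]
    ring
  rw [two_mul]
  nth_rw 2 [hswap]
  rw [← sum_add_distrib]
  exact sum_congr rfl fun π _ => by ring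

lemma sum_sq_z_mul_exp_eq_tiltedSq_sub {j k l m : ι} (hkj : k ≠ j) (hkl : k ≠ l)
    (hmj : m ≠ j) (hml : m ≠ l) :
    ∑ π : Perm ι, z y j k (π l) (π m) ^ 2 * exp (u * c y π) =
      tiltedSq y u j k - swapDefect y u j k l m := by
  rw [← Equiv.sum_comp (Equiv.mulRight (swap j l * swap k m)), tiltedSq, swapDefect,
    ← sum_sub_distrib]
  refine sum_congr rfl fun π _ => ?_
  have hl : (π * (swap j l * swap k m)) l = π j := by
    rw [Perm.mul_apply, Perm.mul_apply, swap_apply_of_ne_of_ne hkl.symm hml.symm, swap_apply_right]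
  have hm : (π * (swap j l * swap k m)) m = π k := by
    rw [Perm.mul_apply, Perm.mul_apply, swap_apply_right, swap_apply_of_ne_of_ne hkj hkl]
  have he : exp (u * c y (π * (swap j l * swap k m))) =
      exp (u * c y π) * exp (u * z y j l (π l) (π j) + u * z y k m (π m) (π k)) := by
    rw [c_mul_swap_mul_swap y π hkj hkl hmj hml, ← Complex.exp_add, z_swap_cols y j l,
      z_swap_cols y k m]
    ring_nf
  simp only [coe_mulRight, hl, hm, he]
  ring

lemma tiltedSq_comm (j k : ι) : tiltedSq y u k j = tiltedSq y u j k := by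
  simp only [tiltedSq, z_swap_rows_cols]

lemma swapDefect_self (j k : ι) : swapDefect y u j k j k = 0 := by
  simp [swapDefect]

lemma swapDefect_comm (j k m : ι) : swapDefect y u j k j m = swapDefect y u k j m j := by
  simp only [swapDefect, z_self_left, mul_zero, zero_add, add_zero, z_swap_rows_cols]

lemma tiltedSq_sub_sum_sq_z_mul_exp {j k l m : ι} (hjk : j ≠ k) (hlm : l ≠ m) :
    tiltedSq y u j k - ∑ π : Perm ι, z y j k (π l) (π m) ^ 2 * exp (u * c y π) =
      if l ≠ k ∧ m ≠ j then swapDefect y u j k l m else swapDefect y u k j l m := by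
  split_ifs with h
  · rw [sum_sq_z_mul_exp_eq_tiltedSq_sub y u hjk.symm h.1.symm h.2 hlm.symm, sub_sub_cancel]
  · -- `(l, m)` is then admissible for the pair `(k, j)`.
    obtain ⟨hjl, hkm⟩ : j ≠ l ∧ k ≠ m := by
      rw [not_and_or, not_ne_iff, not_ne_iff] at h
      rcases h with rfl | rfl
      · exact ⟨hjk, hlm⟩
      · exact ⟨hlm.symm, hjk.symm⟩
    have h' := sum_sq_z_mul_exp_eq_tiltedSq_sub y u hjk hjl hkm.symm hlm.symm
    simp only [z_swap_rows y j k, neg_sq] at h'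
    rw [h', tiltedSq_comm, sub_sub_cancel]

lemma sum_sq_z_mul_sum_exp (j k : ι) :
    (∑ r, ∑ s, z y j k r s ^ 2) * ∑ π : Perm ι, exp (u * c y π) =
      ∑ l, ∑ m, ∑ π : Perm ι, z y j k (π l) (π m) ^ 2 * exp (u * c y π) := by
  calc (∑ r, ∑ s, z y j k r s ^ 2) * ∑ π : Perm ι, exp (u * c y π)
      = ∑ π : Perm ι, ∑ l, ∑ m, z y j k (π l) (π m) ^ 2 * exp (u * c y π) := by
        rw [mul_sum]
        refine sum_congr rfl fun π _ => ?_
        rw [← Equiv.sum_comp π (fun r => ∑ s, z y j k r s ^ 2), sum_mul]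
        refine sum_congr rfl fun l _ => ?_
        rw [← Equiv.sum_comp π (fun s => z y j k (π l) s ^ 2), sum_mul]
    _ = _ := by
        rw [sum_comm]
        exact sum_congr rfl fun l _ => sum_comm

lemma sum_offDiag_tiltedSq_sub (j k : ι) :
    ∑ l, ∑ m, (if l ≠ m then
        tiltedSq y u j k - ∑ π : Perm ι, z y j k (π l) (π m) ^ 2 * exp (u * c y π) else 0) =
      ((Fintype.card ι : ℂ) ^ 2 - Fintype.card ι) * tiltedSq y u j k -
        (∑ r, ∑ s, z y j k r s ^ 2) * ∑ π : Perm ι, exp (u * c y π) := by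
  have hdiag : ∀ l m, (if l ≠ m then
      tiltedSq y u j k - ∑ π : Perm ι, z y j k (π l) (π m) ^ 2 * exp (u * c y π) else 0) =
      tiltedSq y u j k - ∑ π : Perm ι, z y j k (π l) (π m) ^ 2 * exp (u * c y π) -
        if l = m then tiltedSq y u j k else 0 := by
    intro l m
    by_cases h : l = m
    · subst h; simp
    · simp [h]
  simp only [hdiag, sum_sub_distrib, Fintype.sum_ite_eq, sum_const, card_univ, nsmul_eq_mul,
    sum_sq_z_mul_sum_exp]
  ring

theorem sum_tiltedSq_sub_sum_sq_z_mul_sum_exp :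
    ((Fintype.card ι : ℂ) ^ 2 - Fintype.card ι) * ∑ j, ∑ k, tiltedSq y u j k -
        (∑ j, ∑ k, ∑ r, ∑ s, z y j k r s ^ 2) * ∑ π : Perm ι, exp (u * c y π) =
      4 * ∑ j, ∑ k, ∑ l, (if j ≠ k ∧ j ≠ l ∧ k ≠ l then swapDefect y u j k l k else 0) +
        ∑ j, ∑ k, ∑ l, ∑ m, (if j ≠ k ∧ j ≠ l ∧ j ≠ m ∧ k ≠ l ∧ k ≠ m ∧ l ≠ m then
          swapDefect y u j k l m else 0) := by
  have hcomb := sum_offDiag_offDiag_eq (swapDefect y u) (swapDefect_self y u) (swapDefect_comm y u)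
  rw [nsmul_eq_mul, Nat.cast_ofNat] at hcomb
  rw [← hcomb, mul_sum, sum_mul, ← sum_sub_distrib]
  refine sum_congr rfl fun j _ => ?_
  rw [mul_sum, sum_mul, ← sum_sub_distrib]
  refine sum_congr rfl fun k _ => ?_
  rw [← sum_offDiag_tiltedSq_sub]
  by_cases hjk : j = k
  · subst hjk
    simp [tiltedSq]
  refine sum_congr rfl fun l _ => sum_congr rfl fun m _ => ?_
  by_cases hlm : l = m
  · simp [hlm]
  · rw [if_pos hlm, if_pos ⟨hjk, hlm⟩, tiltedSq_sub_sum_sq_z_mul_exp y u hjk hlm]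

theorem mul_sum_tiltedSq_sub_sum_sq_z_mul_sum_exp :
    u * (((Fintype.card ι : ℂ) ^ 2 - Fintype.card ι) * ∑ j, ∑ k, tiltedSq y u j k -
        (∑ j, ∑ k, ∑ r, ∑ s, z y j k r s ^ 2) * ∑ π : Perm ι, exp (u * c y π)) =
      4 * (∑ j, ∑ k, ∑ l, if j ≠ k ∧ j ≠ l ∧ k ≠ l then
        ∑ π : Perm ι, u * z y j k (π j) (π k) ^ 2 * (1 - exp (u * z y j l (π l) (π j))) *
          exp (u * c y π) else 0) +
      ∑ j, ∑ k, ∑ l, ∑ m, if j ≠ k ∧ j ≠ l ∧ j ≠ m ∧ k ≠ l ∧ k ≠ m ∧ l ≠ m then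
        ∑ π : Perm ι, u * z y j k (π j) (π k) ^ 2 *
          (1 - exp (u * z y j l (π l) (π j) + u * z y k m (π m) (π k))) * exp (u * c y π)
        else 0 := by
  rw [sum_tiltedSq_sub_sum_sq_z_mul_sum_exp]
  simp only [mul_add, mul_sum, mul_ite, mul_zero, swapDefect, z_self_left, add_zero, mul_assoc,
    mul_left_comm u]

lemma four_mul_card_mul_sum_sub_mul_exp [Nonempty ι] :
    4 * Fintype.card ι * ∑ π : Perm ι, (c y π - (∑ j, ∑ r, y j r) / Fintype.card ι) *
        exp (u * c y π) =
      ∑ j, ∑ k, (if j ≠ k then ∑ π : Perm ι, z y j k (π j) (π k) *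
          (1 - u * z y j k (π j) (π k) - exp (-(u * z y j k (π j) (π k)))) *
            exp (u * c y π) else 0) +
        u * ∑ j, ∑ k, tiltedSq y u j k := by
  have hN : (Fintype.card ι : ℂ) ≠ 0 := Nat.cast_ne_zero.2 Fintype.card_ne_zero
  have hcenter : ∀ π : Perm ι,
      4 * Fintype.card ι * ((c y π - (∑ j, ∑ r, y j r) / Fintype.card ι) * exp (u * c y π)) =
        ∑ j, ∑ k, 2 * (z y j k (π j) (π k) * exp (u * c y π)) := by
    intro π
    simp only [← mul_sum, ← sum_mul, sum_sum_z_perm]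
    field_simp
    ring
  have hdiag : ∀ j k, (if j ≠ k then ∑ π : Perm ι, z y j k (π j) (π k) *
      (1 - u * z y j k (π j) (π k) - exp (-(u * z y j k (π j) (π k)))) * exp (u * c y π)
        else 0) = ∑ π : Perm ι, z y j k (π j) (π k) *
      (1 - u * z y j k (π j) (π k) - exp (-(u * z y j k (π j) (π k)))) * exp (u * c y π) := by
    intro j k
    rcases eq_or_ne j k with rfl | hjk
    · simp
    · rw [if_pos hjk]
  simp only [mul_sum, hcenter, hdiag, tiltedSq]
  rw [sum_comm]
  simp only [← sum_add_distrib]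
  refine sum_congr rfl fun j _ => ?_
  rw [sum_comm]
  refine sum_congr rfl fun k _ => ?_
  rw [← mul_sum, two_mul_sum_z_mul_exp]
  exact sum_congr rfl fun π _ => by ring

end Hoeffding

end

open scoped BigOperators

theorem stmt_14_general
    (n : ℕ) (hn : 2 ≤ n) (y : Fin n → Fin n → ℂ)
    (z : Fin n → Fin n → Fin n → Fin n → ℂ)
    (hz : ∀ j k r s, z j k r s = y j r - y k r - y j s + y k s)
    (c : Equiv.Perm (Fin n) → ℂ)
    (hc : ∀ π, c π = ∑ j, y j (π j))
    (ytil : Fin n → Fin n → ℂ)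
    (hytil : ∀ j r, ytil j r =
      y j r - (∑ k, y k r) / n - (∑ s, y j s) / n + (∑ k, ∑ s, y k s) / (n : ℂ) ^ 2)
    (α β : ℂ)
    (hα : α = (∑ j, ∑ r, y j r) / n)
    (hβ : β = (∑ j, ∑ r, (ytil j r) ^ 2) / ((n : ℂ) - 1))
    (f₁ f₂ f₃ f : ℝ → ℂ)
    (hf₁ : ∀ u : ℝ, f₁ u = ∑ j, ∑ k, if j ≠ k then
      ∑ π : Equiv.Perm (Fin n), z j k (π j) (π k) *
        (1 - (u : ℂ) * z j k (π j) (π k) - Complex.exp (-((u : ℂ) * z j k (π j) (π k)))) *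
        Complex.exp ((u : ℂ) * c π) else 0)
    (hf₂ : ∀ u : ℝ, f₂ u = ∑ j, ∑ k, ∑ l, if j ≠ k ∧ j ≠ l ∧ k ≠ l then
      ∑ π : Equiv.Perm (Fin n), (u : ℂ) * (z j k (π j) (π k)) ^ 2 *
        (1 - Complex.exp ((u : ℂ) * z j l (π l) (π j))) *
        Complex.exp ((u : ℂ) * c π) else 0)
    (hf₃ : ∀ u : ℝ, f₃ u = ∑ j, ∑ k, ∑ l, ∑ m,
      if j ≠ k ∧ j ≠ l ∧ j ≠ m ∧ k ≠ l ∧ k ≠ m ∧ l ≠ m then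
      ∑ π : Equiv.Perm (Fin n), (u : ℂ) * (z j k (π j) (π k)) ^ 2 *
        (1 - Complex.exp ((u : ℂ) * z j l (π l) (π j) + (u : ℂ) * z k m (π m) (π k))) *
        Complex.exp ((u : ℂ) * c π) else 0)
    (hf : ∀ u : ℝ, f u = f₁ u / (4 * n) + f₂ u / ((n : ℂ) ^ 2 * ((n : ℂ) - 1)) +
      f₃ u / (4 * (n : ℂ) ^ 2 * ((n : ℂ) - 1)))
    (u : ℝ) :
    ∑ π : Equiv.Perm (Fin n), (c π - α - (u : ℂ) * β) * Complex.exp ((u : ℂ) * c π) =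
      f u := by
  have : Nonempty (Fin n) := ⟨⟨0, by omega⟩⟩
  obtain rfl : z = Hoeffding.z y := by ext j k r s; exact hz j k r s
  obtain rfl : c = Hoeffding.c y := funext hc
  obtain rfl : ytil = Hoeffding.ytil y := by ext j r; simp [hytil, Hoeffding.ytil]
  have hN : (n : ℂ) ≠ 0 := by exact_mod_cast (by omega : n ≠ 0)
  have hN1 : (n : ℂ) - 1 ≠ 0 := sub_ne_zero.2 (by exact_mod_cast (by omega : n ≠ 1))
  have h₁ := Hoeffding.four_mul_card_mul_sum_sub_mul_exp y u
  have h₂ := Hoeffding.mul_sum_tiltedSq_sub_sum_sq_z_mul_sum_exp y u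
  have h₃ := Hoeffding.sum_sq_z y
  simp only [Fintype.card_fin] at h₁ h₂ h₃
  rw [← hf₁] at h₁
  rw [← hf₂, ← hf₃] at h₂
  rw [hf, hα, hβ]
  simp only [sub_mul _ ((u : ℂ) * _), sum_sub_distrib, ← mul_sum]
  generalize ∑ π : Perm (Fin n), (Hoeffding.c y π - (∑ j, ∑ r, y j r) / n) *
    exp (u * Hoeffding.c y π) = P at h₁ ⊢
  field_simp
  linear_combination (n : ℂ) * (n - 1) * h₁ + h₂ +
    (u : ℂ) * (∑ π : Perm (Fin n), exp (u * Hoeffding.c y π)) * h₃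

/-- Lemma 7, identity (18): `Σ_r (c_r − α − uβ) e^{u c_r} = f(u)` for `u ∈ [0,1]`. -/
theorem stmt_14
    (n : ℕ) (hn : 2 ≤ n) (y : Fin n → Fin n → ℂ)
    (z : Fin n → Fin n → Fin n → Fin n → ℂ)
    (hz : ∀ j k r s, z j k r s = y j r - y k r - y j s + y k s)
    (c : Equiv.Perm (Fin n) → ℂ)
    (hc : ∀ π, c π = ∑ j, y j (π j))
    (ytil : Fin n → Fin n → ℂ)
    (hytil : ∀ j r, ytil j r =
      y j r - (∑ k, y k r) / n - (∑ s, y j s) / n + (∑ k, ∑ s, y k s) / (n : ℂ) ^ 2)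
    (α β : ℂ)
    (hα : α = (∑ j, ∑ r, y j r) / n)
    (hβ : β = (∑ j, ∑ r, (ytil j r) ^ 2) / ((n : ℂ) - 1))
    (f₁ f₂ f₃ f : ℝ → ℂ)
    (hf₁ : ∀ u : ℝ, f₁ u = ∑ j, ∑ k, if j ≠ k then
      ∑ π : Equiv.Perm (Fin n), z j k (π j) (π k) *
        (1 - (u : ℂ) * z j k (π j) (π k) - Complex.exp (-((u : ℂ) * z j k (π j) (π k)))) *
        Complex.exp ((u : ℂ) * c π) else 0)
    (hf₂ : ∀ u : ℝ, f₂ u = ∑ j, ∑ k, ∑ l, if j ≠ k ∧ j ≠ l ∧ k ≠ l then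
      ∑ π : Equiv.Perm (Fin n), (u : ℂ) * (z j k (π j) (π k)) ^ 2 *
        (1 - Complex.exp ((u : ℂ) * z j l (π l) (π j))) *
        Complex.exp ((u : ℂ) * c π) else 0)
    (hf₃ : ∀ u : ℝ, f₃ u = ∑ j, ∑ k, ∑ l, ∑ m,
      if j ≠ k ∧ j ≠ l ∧ j ≠ m ∧ k ≠ l ∧ k ≠ m ∧ l ≠ m then
      ∑ π : Equiv.Perm (Fin n), (u : ℂ) * (z j k (π j) (π k)) ^ 2 *
        (1 - Complex.exp ((u : ℂ) * z j l (π l) (π j) + (u : ℂ) * z k m (π m) (π k))) *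
        Complex.exp ((u : ℂ) * c π) else 0)
    (hf : ∀ u : ℝ, f u = f₁ u / (4 * n) + f₂ u / ((n : ℂ) ^ 2 * ((n : ℂ) - 1)) +
      f₃ u / (4 * (n : ℂ) ^ 2 * ((n : ℂ) - 1)))
    (u : ℝ) (hu : u ∈ Set.Icc (0 : ℝ) 1) :
    ∑ π : Equiv.Perm (Fin n), (c π - α - (u : ℂ) * β) * Complex.exp ((u : ℂ) * c π) =
      f u :=
  stmt_14_general n hn y z hz c hc ytil hytil α β hα hβ f₁ f₂ f₃ f hf₁ hf₂ hf₃ hf u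
end

section
/- For g(x,y) = x² min{1, |y|} and all c, x, y, z ∈ ℝ the following hold: (a) g(x, y+z) ≤ g(x,y) + g(x,z) ≤ 2 g(x, (|y|+|z|)/2); (b) g(x, cy) + g(y, cx) ≤ g(x, cx) + g(y, cy); (c) if c ≠ 0, then x² − 4/(27c²) ≤ g(x, cx). -/
private lemma min_add_le (a b : ℝ) (ha : 0 ≤ a) (hb : 0 ≤ b) :
    min 1 (a + b) ≤ min 1 a + min 1 b := by
  rcases le_total a 1 with h1 | h1 <;> rcases le_total b 1 with h2 | h2 <;>
    simp [min_def] <;> split_ifs <;> nlinarith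

private lemma min_concave (a b : ℝ) (ha : 0 ≤ a) (hb : 0 ≤ b) :
    min 1 a + min 1 b ≤ 2 * min 1 ((a + b) / 2) := by
  rcases le_total a 1 with h1 | h1 <;> rcases le_total b 1 with h2 | h2 <;>
    simp [min_def] <;> split_ifs <;> nlinarith

private lemma min_mono (a b : ℝ) (h : a ≤ b) : min 1 a ≤ min 1 b :=
  min_le_min le_rfl h

/-- Lemma 11: properties of `g(x,y) = x² min{1,|y|}`. -/
theorem stmt_18
    (g : ℝ → ℝ → ℝ) (hg : ∀ x y, g x y = x ^ 2 * min 1 |y|)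
    (c x y z : ℝ) :
    (g x (y + z) ≤ g x y + g x z ∧ g x y + g x z ≤ 2 * g x ((|y| + |z|) / 2)) ∧
    g x (c * y) + g y (c * x) ≤ g x (c * x) + g y (c * y) ∧
    (c ≠ 0 → x ^ 2 - 4 / (27 * c ^ 2) ≤ g x (c * x)) := by
  have hx2 : (0:ℝ) ≤ x ^ 2 := sq_nonneg x
  simp only [hg]
  refine ⟨⟨?_, ?_⟩, ?_, ?_⟩
  · have h1 : min 1 |y + z| ≤ min 1 |y| + min 1 |z| :=
      le_trans (min_mono _ _ (abs_add_le y z)) (min_add_le _ _ (abs_nonneg y) (abs_nonneg z))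
    nlinarith [sq_nonneg x]
  · have habs : |(|y| + |z|) / 2| = (|y| + |z|) / 2 := by
      rw [abs_of_nonneg]; positivity
    rw [habs]
    have h1 := min_concave |y| |z| (abs_nonneg y) (abs_nonneg z)
    nlinarith [sq_nonneg x]
  · -- rearrangement
    rcases le_total |x| |y| with h | h
    · have hmono : min 1 |c * x| ≤ min 1 |c * y| := by
        apply min_mono
        rw [abs_mul, abs_mul]
        exact mul_le_mul_of_nonneg_left h (abs_nonneg c)
      have hxy : x ^ 2 ≤ y ^ 2 := by nlinarith [sq_abs x, sq_abs y, abs_nonneg x]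
      nlinarith [mul_nonneg (sub_nonneg.2 hxy) (sub_nonneg.2 hmono)]
    · have hmono : min 1 |c * y| ≤ min 1 |c * x| := by
        apply min_mono
        rw [abs_mul, abs_mul]
        exact mul_le_mul_of_nonneg_left h (abs_nonneg c)
      have hxy : y ^ 2 ≤ x ^ 2 := by nlinarith [sq_abs x, sq_abs y, abs_nonneg y]
      nlinarith [mul_nonneg (sub_nonneg.2 hxy) (sub_nonneg.2 hmono)]
  · intro hc
    rcases le_total 1 |c * x| with h | h
    · rw [min_eq_left h]
      have : 0 < 27 * c ^ 2 := by positivity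
      have : 0 ≤ 4 / (27 * c ^ 2) := by positivity
      linarith
    · rw [min_eq_right h]
      rw [abs_mul] at h
      have hc2 : (0:ℝ) < c ^ 2 := by positivity
      have hxx : x ^ 2 = |x| ^ 2 := (sq_abs x).symm
      have ht : c ^ 2 * x ^ 2 = (|c| * |x|) ^ 2 := by rw [mul_pow, sq_abs, sq_abs]
      have ht0 : 0 ≤ |c| * |x| := mul_nonneg (abs_nonneg c) (abs_nonneg x)
      have key : c ^ 2 * x ^ 2 * (1 - |c| * |x|) ≤ 4 / 27 := by
        nlinarith [mul_nonneg (sq_nonneg (3 * (|c| * |x|) - 2)) (by linarith : (0:ℝ) ≤ 3 * (|c| * |x|) + 1)]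
      have key2 : x ^ 2 * (1 - |c| * |x|) ≤ 4 / (27 * c ^ 2) := by
        rw [le_div_iff₀ (by positivity : (0:ℝ) < 27 * c ^ 2)]
        nlinarith [key]
      rw [abs_mul]
      linarith
end
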